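/- arXiv:2112.09453 — 8 statements merged into one kernel-verified Lean document; each statement's English description precedes it below -/
import Mathlib

section
/- There exists a constant M > 1 such that for every integer d ≥ 1, all reals r₁, r₂ with 0 ≤ r₁ ≤ r₂, and every finite graph G ∈ 𝒜_d(r₁,r₂) having at least one vertex, the chromatic number satisfies χ(G) ≤ M^d · ω(G). In particular this holds for unit disc graphs (the case r₁ = 0, r₂ = 1) and for every family 𝒜_d(1,x) with x ≥ 1. -/
/-- `f` is an `(R₁,R₂)`-annulus embedding of the simple graph `G` in `ℝ^d`. -/
def IsAnnulusEmbedding {d : ℕ} {V : Type*} (G : SimpleGraph V) (R₁ R₂ : ℝ)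
    (f : V → EuclideanSpace ℝ (Fin d)) : Prop :=
  Function.Injective f ∧
    ∀ u v : V, u ≠ v → (G.Adj u v ↔ dist (f u) (f v) ∈ Set.Icc R₁ R₂)

/-- `G` belongs to the family `𝒜_d(R₁,R₂)` of `d`-dimensional annulus graphs. -/
def MemAnnulusFamily (d : ℕ) (R₁ R₂ : ℝ) {V : Type*} (G : SimpleGraph V) : Prop :=
  ∃ f : V → EuclideanSpace ℝ (Fin d), IsAnnulusEmbedding G R₁ R₂ f

/-!
Send every vertex to a centre within distance `r₂ / 2`, the centres forming a maximal
`r₂ / 2`-separated set. Vertices of cells whose centres are more than `2 r₂` apart are never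
adjacent, and by volume packing a centre has fewer than `9 ^ d` other centres within `2 r₂`, so
greedily `9 ^ d` colours separate all cells that can interact. A cell has diameter at most `r₂`,
so any `r₁`-separated set inside it is a clique; a maximal `r₁ / 2`-separated set of the cell
therefore has at most `ω · 5 ^ d` points (packing again), and the pieces around these points have
diameter below `r₁`, hence are independent. Colouring a vertex by its cell colour and its piece
uses `9 ^ d · 5 ^ d · ω = 45 ^ d · ω` colours.
-/

open Metric MeasureTheory Finset Module Function

theorem card_le_pow_finrank_of_separated {ι E : Type*} [NormedAddCommGroup E] [NormedSpace ℝ E]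
    [FiniteDimensional ℝ E] {s : Finset ι} {g : ι → E} {c : E} {r R : ℝ} {K : ℕ} (hr : 0 < r)
    (hK : 2 * R + r ≤ K * r) (hsep : (s : Set ι).Pairwise fun a b => r ≤ dist (g a) (g b))
    (hs : ∀ a ∈ s, dist (g a) c ≤ R) : #s ≤ K ^ finrank ℝ E := by
  borelize E
  let μ : Measure E := Measure.addHaar
  rcases s.eq_empty_or_nonempty with rfl | ⟨a, ha⟩
  · simp
  have hR : 0 ≤ R := dist_nonneg.trans (hs a ha)
  have hball : ∀ x {ρ : ℝ}, 0 < ρ → μ.real (ball x ρ) = ρ ^ finrank ℝ E * μ.real (ball 0 1) :=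
    fun x ρ hρ => by simp [measureReal_def, Measure.addHaar_ball_of_pos μ x hρ, hρ.le]
  have hunit : 0 < μ.real (ball 0 1) :=
    ENNReal.toReal_pos (measure_ball_pos μ 0 one_pos).ne' measure_ball_lt_top.ne
  have hdisj : (s : Set ι).PairwiseDisjoint fun a => ball (g a) (r / 2) :=
    fun a ha b hb hab => ball_disjoint_ball (by linarith [hsep ha hb hab])
  have hsub : ⋃ a ∈ s, ball (g a) (r / 2) ⊆ ball c (R + r / 2) := by
    simp only [Set.iUnion_subset_iff]
    intro a ha x hx
    rw [mem_ball] at hx ⊢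
    linarith [dist_triangle x (g a) c, hs a ha]
  have hvol : #s * (r / 2) ^ finrank ℝ E * μ.real (ball 0 1) ≤
      (K * (r / 2)) ^ finrank ℝ E * μ.real (ball 0 1) :=
    calc #s * (r / 2) ^ finrank ℝ E * μ.real (ball 0 1)
      _ = ∑ a ∈ s, μ.real (ball (g a) (r / 2)) := by simp [hball _ (half_pos hr), mul_assoc]
      _ = μ.real (⋃ a ∈ s, ball (g a) (r / 2)) :=
          (measureReal_biUnion_finset hdisj fun _ _ => measurableSet_ball).symm
      _ ≤ μ.real (ball c (R + r / 2)) := measureReal_mono hsub measure_ball_lt_top.ne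
      _ = (R + r / 2) ^ finrank ℝ E * μ.real (ball 0 1) := hball c (by positivity)
      _ ≤ (K * (r / 2)) ^ finrank ℝ E * μ.real (ball 0 1) := by gcongr; linarith
  rw [mul_pow] at hvol
  exact_mod_cast le_of_mul_le_mul_right (le_of_mul_le_mul_right hvol hunit) (by positivity)

/-- The disjunct `a = b` keeps the covering property meaningful for `r ≤ 0`. -/
theorem Finset.exists_separated_net {ι X : Type*} [PseudoMetricSpace X] [DecidableEq ι]
    (A : Finset ι) (g : ι → X) (r : ℝ) :
    ∃ S ⊆ A, ((S : Set ι).Pairwise fun a b => r ≤ dist (g a) (g b)) ∧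
      ∀ a ∈ A, ∃ b ∈ S, a = b ∨ dist (g a) (g b) < r := by
  induction A using Finset.induction_on with
  | empty => exact ⟨∅, subset_rfl, by simp, by simp⟩
  | insert a A _ ih =>
    obtain ⟨S, hSA, hsep, hcov⟩ := ih
    by_cases hnear : ∃ b ∈ S, dist (g a) (g b) < r
    · obtain ⟨b, hb, hab⟩ := hnear
      refine ⟨S, hSA.trans (subset_insert a A), hsep, ?_⟩
      simp only [mem_insert, forall_eq_or_imp]
      exact ⟨⟨b, hb, Or.inr hab⟩, hcov⟩
    · push Not at hnear
      refine ⟨insert a S, insert_subset_insert a hSA, ?_, ?_⟩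
      · rw [coe_insert]
        exact hsep.insert fun b hb _ => ⟨hnear b hb, dist_comm (g a) (g b) ▸ hnear b hb⟩
      · simp only [mem_insert, forall_eq_or_imp]
        refine ⟨⟨a, Or.inl rfl, Or.inl rfl⟩, fun x hx => ?_⟩
        obtain ⟨b, hb, hxb⟩ := hcov x hx
        exact ⟨b, Or.inr hb, hxb⟩

theorem SimpleGraph.colorable_of_forall_degree_lt {V : Type*} [Fintype V] [DecidableEq V]
    {G : SimpleGraph V} [DecidableRel G.Adj] {k : ℕ} (hdeg : ∀ v, G.degree v < k) :
    G.Colorable k := by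
  suffices ∀ s : Finset V, ∃ c : V → ℕ, (∀ v ∈ s, c v < k) ∧
      ∀ u ∈ s, ∀ v ∈ s, G.Adj u v → c u ≠ c v by
    obtain ⟨c, hck, hc⟩ := this univ
    exact (SimpleGraph.colorable_iff_exists_bdd_nat_coloring k).2
      ⟨⟨c, fun h => hc _ (mem_univ _) _ (mem_univ _) h⟩, fun v => hck v (mem_univ v)⟩
  intro s
  induction s using Finset.induction_on with
  | empty => exact ⟨0, by simp, by simp⟩
  | insert v s hv ih =>
    obtain ⟨c, hck, hc⟩ := ih
    have hfree : ∃ a ∈ range k, a ∉ (G.neighborFinset v).image c := by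
      by_contra! h
      have := card_le_card h
      rw [card_range] at this
      exact (this.trans card_image_le).not_gt (hdeg v)
    obtain ⟨a, hak, ha⟩ := hfree
    refine ⟨Function.update c v a, ?_, ?_⟩
    · intro u hu
      rcases eq_or_ne u v with rfl | huv
      · simpa using hak
      · simpa [huv] using hck u ((mem_insert.1 hu).resolve_left huv)
    · have hav : ∀ u ∈ s, G.Adj v u → c u ≠ a := fun u hu huv hcu =>
        ha (mem_image.2 ⟨u, (G.mem_neighborFinset v u).2 huv, hcu⟩)
      intro u hu w hw huw
      simp only [mem_insert] at hu hw
      rcases hu with rfl | hu <;> rcases hw with rfl | hw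
      · exact (G.irrefl huw).elim
      · simpa [G.ne_of_adj huw |>.symm] using (hav w hw huw).symm
      · simpa [G.ne_of_adj huw] using hav u hu huw.symm
      · rw [Function.update_of_ne (ne_of_mem_of_not_mem hu hv),
          Function.update_of_ne (ne_of_mem_of_not_mem hw hv)]
        exact hc u hu w hw huw

theorem SimpleGraph.colorable_mul_of_fibers {V W : Type*} {G : SimpleGraph V} {H : SimpleGraph W}
    (π : V → W) {a b : ℕ} (hH : H.Colorable a)
    (hπ : ∀ ⦃u v⦄, G.Adj u v → π u ≠ π v → H.Adj (π u) (π v))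
    (hfib : ∀ w, (G.induce (π ⁻¹' {w})).Colorable b) : G.Colorable (a * b) := by
  obtain ⟨κ⟩ := hH
  let c w := (hfib w).some
  have c_congr : ∀ {u} w (hu : π u = w), c w ⟨u, hu⟩ = c (π u) ⟨u, rfl⟩ := by
    rintro _ _ rfl; rfl
  let C : G.Coloring (Fin a × Fin b) :=
    .mk (fun v => (κ (π v), c (π v) ⟨v, rfl⟩)) fun {u v} huv h => by
      by_cases hsame : π u = π v
      · refine (c (π v)).valid (v := ⟨u, hsame⟩) (w := ⟨v, rfl⟩) huv ?_
        rw [c_congr _ hsame]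
        exact congrArg Prod.snd h
      · exact κ.valid (hπ huv hsame) (congrArg Prod.fst h)
  simpa using C.colorable

section Annulus

variable {V E : Type*} [NormedAddCommGroup E] [NormedSpace ℝ E] [FiniteDimensional ℝ E]
  {f : V → E}

theorem exists_centers_colorable [Fintype V] [DecidableEq V] (hf : Injective f) {r : ℝ}
    (hr : 0 ≤ r) :
    ∃ (S : Finset V) (π : V → S), (∀ v, dist (f v) (f (π v)) ≤ r) ∧
      (SimpleGraph.fromRel fun a b : S => dist (f a) (f b) ≤ 4 * r).Colorable
        (9 ^ finrank ℝ E) := by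
  obtain ⟨S, -, hsep, hcov⟩ := univ.exists_separated_net f r
  choose π hπS hπ using fun v => hcov v (mem_univ v)
  refine ⟨S, fun v => ⟨π v, hπS v⟩,
    fun v => (hπ v).elim (fun h => by simp [← h, hr]) le_of_lt, ?_⟩
  classical
  set H := SimpleGraph.fromRel fun a b : S => dist (f a) (f b) ≤ 4 * r
  have hH : ∀ {a b}, H.Adj a b ↔ a ≠ b ∧ dist (f a) (f b) ≤ 4 * r := by
    simp [H, dist_comm]
  refine SimpleGraph.colorable_of_forall_degree_lt fun a => ?_
  rcases hr.eq_or_lt with rfl | hr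
  · have hisol : H.neighborFinset a = ∅ := eq_empty_of_forall_notMem fun b hb => by
      rw [SimpleGraph.mem_neighborFinset, hH] at hb
      exact hb.1 (Subtype.ext (hf (dist_le_zero.1 (by linarith [hb.2]))))
    rw [← SimpleGraph.card_neighborFinset_eq_degree, hisol, card_empty]
    positivity
  · have hpack := card_le_pow_finrank_of_separated (s := insert a (H.neighborFinset a))
      (g := fun b : S => f b) (c := f a) (R := 4 * r) (K := 9) hr (by push_cast; linarith)
      (fun x _ y _ hxy => hsep x.2 y.2 (Subtype.coe_injective.ne hxy)) fun b hb => by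
        rcases mem_insert.1 hb with rfl | hb
        · simpa using hr.le
        · rw [SimpleGraph.mem_neighborFinset, hH] at hb
          rw [dist_comm]
          exact hb.2
    rw [card_insert_of_notMem (H.notMem_neighborFinset_self a),
      SimpleGraph.card_neighborFinset_eq_degree] at hpack
    omega

variable {G : SimpleGraph V} {r₁ r₂ : ℝ}

theorem card_le_cliqueNum_mul_of_separated [Finite V]
    (hadj : ∀ u v, u ≠ v → (G.Adj u v ↔ dist (f u) (f v) ∈ Set.Icc r₁ r₂)) (hr₁ : 0 ≤ r₁)
    {U : Finset V} (hsep : (U : Set V).Pairwise fun a b => r₁ / 2 ≤ dist (f a) (f b))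
    (hdiam : (U : Set V).Pairwise fun a b => dist (f a) (f b) ≤ r₂) :
    #U ≤ G.cliqueNum * 5 ^ finrank ℝ E := by
  classical
  have hclique : ∀ W ⊆ U, ((W : Set V).Pairwise fun a b => r₁ ≤ dist (f a) (f b)) →
      #W ≤ G.cliqueNum := fun W hWU hW => SimpleGraph.IsClique.card_le_cliqueNum
    (tc := fun a ha b hb hab => (hadj a b hab).2 ⟨hW ha hb hab, hdiam (hWU ha) (hWU hb) hab⟩)
  rcases hr₁.eq_or_lt with rfl | hr₁
  · exact (hclique U subset_rfl fun a _ b _ _ => dist_nonneg).trans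
      (Nat.le_mul_of_pos_right _ (by positivity))
  obtain ⟨W, hWU, hWsep, hWcov⟩ := U.exists_separated_net f r₁
  have hcover : U ⊆ W.biUnion fun w => {x ∈ U | dist (f x) (f w) ≤ r₁} := fun x hx => by
    obtain ⟨w, hw, hxw⟩ := hWcov x hx
    refine mem_biUnion.2 ⟨w, hw, mem_filter.2 ⟨hx, ?_⟩⟩
    rcases hxw with rfl | h
    · simpa using hr₁.le
    · exact h.le
  have hball : ∀ w ∈ W, #{x ∈ U | dist (f x) (f w) ≤ r₁} ≤ 5 ^ finrank ℝ E := fun w _ =>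
    card_le_pow_finrank_of_separated (half_pos hr₁) (by push_cast; linarith)
      (hsep.mono (coe_subset.2 (filter_subset _ U))) fun x hx => (mem_filter.1 hx).2
  calc #U ≤ #(W.biUnion fun w => {x ∈ U | dist (f x) (f w) ≤ r₁}) := card_le_card hcover
    _ ≤ ∑ w ∈ W, #{x ∈ U | dist (f x) (f w) ≤ r₁} := card_biUnion_le
    _ ≤ #W * 5 ^ finrank ℝ E := sum_le_card_nsmul _ _ _ hball
    _ ≤ G.cliqueNum * 5 ^ finrank ℝ E := by
      gcongr
      exact hclique W hWU hWsep

theorem colorable_induce_of_pairwise_dist_le [Fintype V]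
    (hadj : ∀ u v, u ≠ v → (G.Adj u v ↔ dist (f u) (f v) ∈ Set.Icc r₁ r₂)) (hr₁ : 0 ≤ r₁)
    {A : Set V} (hA : A.Pairwise fun u v => dist (f u) (f v) ≤ r₂) :
    (G.induce A).Colorable (G.cliqueNum * 5 ^ finrank ℝ E) := by
  classical
  obtain ⟨U, hUA, hsep, hcov⟩ := A.toFinset.exists_separated_net f (r₁ / 2)
  choose ν hνU hν using fun v : A => hcov v (Set.mem_toFinset.2 v.2)
  let C : (G.induce A).Coloring U := .mk (fun v => ⟨ν v, hνU v⟩) fun {u v} huv h => by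
    have hν_eq : ν u = ν v := congrArg Subtype.val h
    have hne : (u : V) ≠ v := G.ne_of_adj huv
    have hlt : dist (f u) (f v) < r₁ := by
      rcases hν u with hu | hu <;> rcases hν v with hv | hv <;> rw [hν_eq] at hu
      · exact absurd (hu.trans hv.symm) hne
      · rw [hu, dist_comm]
        linarith [dist_nonneg (x := f v) (y := f (ν v))]
      · rw [hv]
        linarith [dist_nonneg (x := f u) (y := f (ν v))]
      · linarith [dist_triangle_right (f u) (f v) (f (ν v))]
    exact ((hadj u v hne).1 huv).1.not_gt hlt
  exact C.colorable.mono ((Fintype.card_coe U).trans_le (card_le_cliqueNum_mul_of_separated hadj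
    hr₁ hsep (hA.mono fun x hx => Set.mem_toFinset.1 (hUA hx))))

end Annulus

/-- There is a constant `M > 1` such that every finite `d`-dimensional annulus graph
`G` (with at least one vertex, radii `0 ≤ r₁ ≤ r₂`) satisfies `χ(G) ≤ M^d · ω(G)`:
that is, `G` admits a proper colouring with some number `k ≤ M^d · ω(G)` of colours. -/
theorem annulus_chi_le_omega :
    ∃ M : ℝ, 1 < M ∧ ∀ (d : ℕ), 1 ≤ d → ∀ r₁ r₂ : ℝ, 0 ≤ r₁ → r₁ ≤ r₂ →
      ∀ (n : ℕ) (G : SimpleGraph (Fin n)), 1 ≤ n →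
        MemAnnulusFamily d r₁ r₂ G →
          ∃ k : ℕ, G.Colorable k ∧ (k : ℝ) ≤ M ^ d * (G.cliqueNum : ℝ) := by
  refine ⟨45, by norm_num, fun d _ r₁ r₂ hr₁ hr₁₂ n G _ ⟨f, hinj, hadj⟩ => ?_⟩
  obtain ⟨S, π, hπ, hH⟩ := exists_centers_colorable hinj (r := r₂ / 2) (by linarith)
  have hfar : ∀ ⦃u v⦄, G.Adj u v → π u ≠ π v →
      (SimpleGraph.fromRel fun a b : S => dist (f a) (f b) ≤ 4 * (r₂ / 2)).Adj (π u) (π v) :=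
    fun u v huv hπuv => ⟨hπuv, Or.inl (by
      linarith [dist_triangle4 (f (π u)) (f u) (f v) (f (π v)), dist_comm (f u) (f (π u)), hπ u,
        hπ v, ((hadj u v (G.ne_of_adj huv)).1 huv).2])⟩
  have hcell : ∀ w, (G.induce (π ⁻¹' {w})).Colorable (G.cliqueNum * 5 ^ finrank ℝ _) :=
    fun w => colorable_induce_of_pairwise_dist_le hadj hr₁ fun u hu v hv _ => by
      rw [Set.mem_preimage, Set.mem_singleton_iff] at hu hv
      linarith [dist_triangle_right (f u) (f v) (f w), hu ▸ hπ u, hv ▸ hπ v]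
  refine ⟨_, SimpleGraph.colorable_mul_of_fibers π hH hfar hcell, ?_⟩
  rw [finrank_euclideanSpace_fin, show (45 : ℝ) = 9 * 5 by norm_num, mul_pow]
  push_cast
  exact le_of_eq (by ring)
end

section
/- For every real x > 1 there exists a finite graph G ∈ 𝒜_1(1,x) with clique number ω(G) = 2 and chromatic number χ(G) ≥ 3; in particular sup over G ∈ 𝒜_1(1,x) of χ(G)/ω(G) is at least 3/2. -/
open SimpleGraph Finset

/-- graph on points of a line with annulus adjacency -/
def lineGraph {n : ℕ} (x : ℝ) (pos : Fin n → ℝ) : SimpleGraph (Fin n) where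
  Adj u v := u ≠ v ∧ |pos u - pos v| ∈ Set.Icc 1 x
  symm := by
    constructor
    rintro u v ⟨h1, h2⟩
    exact ⟨h1.symm, by rwa [abs_sub_comm]⟩
  loopless := by constructor; rintro u ⟨h, _⟩; exact h rfl

lemma lineGraph_adj {n : ℕ} (x : ℝ) (pos : Fin n → ℝ) (u v : Fin n) :
    (lineGraph x pos).Adj u v ↔ u ≠ v ∧ |pos u - pos v| ∈ Set.Icc 1 x := Iff.rfl

lemma lineGraph_mem {n : ℕ} (x : ℝ) (pos : Fin n → ℝ) (hinj : Function.Injective pos) :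
    ∃ f : Fin n → EuclideanSpace ℝ (Fin 1),
      Function.Injective f ∧
      ∀ u v, u ≠ v → ((lineGraph x pos).Adj u v ↔ dist (f u) (f v) ∈ Set.Icc 1 x) := by
  refine ⟨fun i => (WithLp.equiv 2 (Fin 1 → ℝ)).symm (fun _ => pos i), ?_, ?_⟩
  · intro a b h
    apply hinj
    have := congrArg (fun g => (WithLp.equiv 2 (Fin 1 → ℝ)) g 0) h
    simpa using this
  · intro u v huv
    have hD : dist ((WithLp.equiv 2 (Fin 1 → ℝ)).symm (fun _ => pos u))
        ((WithLp.equiv 2 (Fin 1 → ℝ)).symm (fun _ => pos v)) = |pos u - pos v| := by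
      rw [EuclideanSpace.dist_eq]
      simp [Real.dist_eq, Real.sqrt_sq_eq_abs]
    rw [hD, lineGraph_adj]
    exact ⟨fun h => h.2, fun h => ⟨huv, h⟩⟩

lemma cliqueNum_eq_two {n : ℕ} (G : SimpleGraph (Fin n)) {u v : Fin n}
    (h : G.Adj u v) (hcf : G.CliqueFree 3) : G.cliqueNum = 2 := by
  apply le_antisymm
  · by_contra hlt
    push_neg at hlt
    obtain ⟨s, hs⟩ := G.exists_isNClique_cliqueNum
    exact (hcf.mono hlt) s hs
  · have hc : G.IsNClique 2 {u, v} := by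
      constructor
      · rw [Finset.coe_insert, Finset.coe_singleton]
        exact SimpleGraph.isClique_pair.mpr (fun _ => h)
      · exact Finset.card_pair h.ne
    have := SimpleGraph.IsClique.card_le_cliqueNum (G := G) (t := {u, v}) (tc := hc.isClique)
    rwa [hc.card_eq] at this

lemma cf3_small {n : ℕ} (x : ℝ) (hx2 : x < 2) (pos : Fin n → ℝ) :
    (lineGraph x pos).CliqueFree 3 := by
  intro s hs
  rw [SimpleGraph.is3Clique_iff] at hs
  obtain ⟨a, b, c, hab, hac, hbc, -⟩ := hs
  obtain ⟨hab1, hab2⟩ := Set.mem_Icc.mp hab.2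
  obtain ⟨hac1, hac2⟩ := Set.mem_Icc.mp hac.2
  obtain ⟨hbc1, hbc2⟩ := Set.mem_Icc.mp hbc.2
  rcases abs_cases (pos a - pos b) with ⟨e1, _⟩ | ⟨e1, _⟩ <;>
    rcases abs_cases (pos a - pos c) with ⟨e2, _⟩ | ⟨e2, _⟩ <;>
      rcases abs_cases (pos b - pos c) with ⟨e3, _⟩ | ⟨e3, _⟩ <;>
        rw [e1] at hab1 hab2 <;> rw [e2] at hac1 hac2 <;> rw [e3] at hbc1 hbc2 <;> linarith

section CaseA

noncomputable def pos5 (x : ℝ) : Fin 5 → ℝ := ![0, x, 2*x, x + 1/2, x - 1/2]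

lemma pos5_inj {x : ℝ} (hx : (3:ℝ)/2 ≤ x) : Function.Injective (pos5 x) := by
  intro a b h
  fin_cases a <;> fin_cases b <;>
    first
    | rfl
    | (exfalso; norm_num [pos5] at h; try linarith)

lemma pos5_adj01 {x : ℝ} (hx : (3:ℝ)/2 ≤ x) : (lineGraph x (pos5 x)).Adj 0 1 := by
  refine ⟨by decide, Set.mem_Icc.mpr ?_⟩
  have h : pos5 x 0 - pos5 x 1 = -x := by norm_num [pos5]
  rw [h, abs_neg, abs_of_nonneg (by linarith)]
  exact ⟨by linarith, le_refl x⟩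

def edgeOK : Fin 5 → Fin 5 → Prop := fun a b =>
  (a, b) ∈ [((0:Fin 5),(1:Fin 5)),(1,0),(1,2),(2,1),(2,3),(3,2),(3,4),(4,3),(4,0),(0,4)]

instance (a b : Fin 5) : Decidable (edgeOK a b) := by
  unfold edgeOK; infer_instance

lemma pos5_adj_edgeOK {x : ℝ} (hx : (3:ℝ)/2 ≤ x) (a b : Fin 5)
    (hab : (lineGraph x (pos5 x)).Adj a b) : edgeOK a b := by
  obtain ⟨hne, hd⟩ := hab
  rw [Set.mem_Icc] at hd
  obtain ⟨h1, h2⟩ := hd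
  rw [le_abs] at h1
  rw [abs_le] at h2
  fin_cases a <;> fin_cases b <;>
    first
    | (exact absurd rfl hne)
    | decide
    | (exfalso; norm_num [pos5] at h1 h2 <;> rcases h1 with h | h <;> linarith)
    | (norm_num [pos5] at h1)
    | (norm_num [pos5] at h2)
    | (exfalso; norm_num [pos5] at h2 <;> rcases h1 with h | h <;> norm_num [pos5] at h <;> linarith)

lemma pos5_cf3 {x : ℝ} (hx : (3:ℝ)/2 ≤ x) : (lineGraph x (pos5 x)).CliqueFree 3 := by
  intro s hs
  rw [SimpleGraph.is3Clique_iff] at hs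
  obtain ⟨a, b, c, hab, hac, hbc, -⟩ := hs
  have e1 := pos5_adj_edgeOK hx a b hab
  have e2 := pos5_adj_edgeOK hx a c hac
  have e3 := pos5_adj_edgeOK hx b c hbc
  have hne1 := hab.ne
  have hne2 := hac.ne
  have hne3 := hbc.ne
  clear hab hac hbc
  revert e1 e2 e3 hne1 hne2 hne3
  revert a b c
  decide

end CaseA

section CaseB

noncomputable def kB (x : ℝ) : ℕ := ⌈(x - 1)⁻¹⌉₊

noncomputable def nB (x : ℝ) : ℕ := 2 * kB x + 1

noncomputable def posB (x : ℝ) : Fin (nB x) → ℝ := fun i =>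
  (if Even i.val then 0 else 1) - (i.val / 2 : ℕ) * (x - 1)

variable {x : ℝ}

lemma kB_pos (hx1 : 1 < x) : 1 ≤ kB x := by
  have hδ : (0:ℝ) < x - 1 := by linarith
  have : (0:ℝ) < (x - 1)⁻¹ := by positivity
  exact Nat.ceil_pos.mpr this

lemma kB_lb (hx1 : 1 < x) : 1 ≤ (kB x : ℝ) * (x - 1) := by
  have hδ : (0:ℝ) < x - 1 := by linarith
  have h := Nat.le_ceil (x - 1)⁻¹
  calc (1:ℝ) = (x-1)⁻¹ * (x-1) := by field_simp
    _ ≤ (kB x : ℝ) * (x-1) := by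
        apply mul_le_mul_of_nonneg_right h hδ.le

lemma kB_ub (hx1 : 1 < x) : (kB x : ℝ) * (x - 1) ≤ x := by
  have hδ : (0:ℝ) < x - 1 := by linarith
  have h : (kB x : ℝ) < (x-1)⁻¹ + 1 := Nat.ceil_lt_add_one (by positivity)
  have := mul_le_mul_of_nonneg_right h.le hδ.le
  calc (kB x : ℝ) * (x - 1) ≤ ((x-1)⁻¹ + 1) * (x-1) := this
    _ = 1 + (x - 1) := by field_simp
    _ ≤ x := by linarith

lemma kB_sub_lt (hx1 : 1 < x) : ((kB x : ℝ) - 1) * (x - 1) < 1 := by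
  have hδ : (0:ℝ) < x - 1 := by linarith
  have h : (kB x : ℝ) < (x-1)⁻¹ + 1 := Nat.ceil_lt_add_one (by positivity)
  have h2 : ((kB x : ℝ) - 1) < (x-1)⁻¹ := by linarith
  calc ((kB x : ℝ) - 1) * (x - 1) < (x-1)⁻¹ * (x-1) := by
        apply mul_lt_mul_of_pos_right h2 hδ
    _ = 1 := by field_simp

lemma posB_even (j : ℕ) (h : 2 * j < nB x) : posB x ⟨2 * j, h⟩ = -(j * (x - 1)) := by
  have he : Even (2 * j) := ⟨j, two_mul j⟩
  have hd : (2 * j) / 2 = j := by omega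
  simp only [posB, hd, if_pos he]
  ring

lemma posB_odd (j : ℕ) (h : 2 * j + 1 < nB x) : posB x ⟨2 * j + 1, h⟩ = 1 - j * (x - 1) := by
  have he : ¬ Even (2 * j + 1) := by
    rw [Nat.even_iff]; omega
  have hd : (2 * j + 1) / 2 = j := by omega
  simp only [posB, hd, if_neg he]

lemma posB_inj (hx1 : 1 < x) : Function.Injective (posB x) := by
  have hδ : (0:ℝ) < x - 1 := by linarith
  have hub : ∀ j : ℕ, j + 1 ≤ kB x → (j : ℝ) * (x - 1) < 1 := by
    intro j hj
    have h1 : (j : ℝ) ≤ (kB x : ℝ) - 1 := by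
      have : (j : ℝ) + 1 ≤ (kB x : ℝ) := by exact_mod_cast hj
      linarith
    calc (j:ℝ) * (x-1) ≤ ((kB x : ℝ) - 1) * (x - 1) :=
          mul_le_mul_of_nonneg_right h1 hδ.le
      _ < 1 := kB_sub_lt hx1
  have cancel : ∀ ja jb : ℕ, (ja : ℝ) * (x-1) = (jb : ℝ) * (x-1) → ja = jb := by
    intro ja jb h
    have := mul_right_cancel₀ (ne_of_gt hδ) h
    exact_mod_cast this
  intro a b h
  obtain ⟨ja, hja⟩ : ∃ j, a.val = 2 * j ∨ a.val = 2 * j + 1 := ⟨a.val / 2, by omega⟩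
  obtain ⟨jb, hjb⟩ : ∃ j, b.val = 2 * j ∨ b.val = 2 * j + 1 := ⟨b.val / 2, by omega⟩
  have hna := a.isLt
  have hnb := b.isLt
  unfold nB at hna hnb
  apply Fin.ext
  have hea : ∀ j : ℕ, Even (2 * j) := fun j => ⟨j, two_mul j⟩
  have heb : ∀ j : ℕ, ¬ Even (2 * j + 1) := fun j => by rw [Nat.even_iff]; omega
  have hda : ∀ j : ℕ, (2 * j) / 2 = j := fun j => by omega
  have hdb : ∀ j : ℕ, (2 * j + 1) / 2 = j := fun j => by omega
  rcases hja with hja | hja <;> rcases hjb with hjb | hjb <;>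
      simp only [posB, hja, hjb, if_pos (hea _), if_neg (heb _), hda, hdb] at h
  · have : ja = jb := cancel _ _ (by linarith)
    omega
  · exfalso
    have h1 : (jb : ℝ) * (x-1) < 1 := hub jb (by omega)
    have h2 : (0:ℝ) ≤ (ja : ℝ) * (x-1) := by positivity
    linarith
  · exfalso
    have h1 : (ja : ℝ) * (x-1) < 1 := hub ja (by omega)
    have h2 : (0:ℝ) ≤ (jb : ℝ) * (x-1) := by positivity
    linarith
  · have : ja = jb := cancel _ _ (by linarith)
    omega

lemma posB_adj1 (hx1 : 1 < x) (j : ℕ) (hj : j < kB x) :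
    (lineGraph x (posB x)).Adj ⟨2*j, by unfold nB; omega⟩ ⟨2*j+1, by unfold nB; omega⟩ := by
  refine ⟨(by simp only [ne_eq, Fin.mk.injEq]; omega), Set.mem_Icc.mpr ?_⟩
  rw [posB_even, posB_odd]
  have : -(↑j * (x - 1)) - (1 - ↑j * (x - 1)) = -1 := by ring
  rw [this, abs_neg, abs_one]
  exact ⟨le_refl 1, hx1.le⟩

lemma posB_adj2 (hx1 : 1 < x) (j : ℕ) (hj : j < kB x) :
    (lineGraph x (posB x)).Adj ⟨2*j+1, by unfold nB; omega⟩ ⟨2*(j+1), by unfold nB; omega⟩ := by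
  refine ⟨(by simp only [ne_eq, Fin.mk.injEq]; omega), Set.mem_Icc.mpr ?_⟩
  rw [posB_odd, posB_even]
  have : (1 - ↑j * (x - 1)) - (-(↑(j+1) * (x - 1))) = x := by push_cast; ring
  rw [this, abs_of_nonneg (by linarith)]
  exact ⟨hx1.le, le_refl x⟩

lemma posB_adj3 (hx1 : 1 < x) :
    (lineGraph x (posB x)).Adj ⟨2 * kB x, by unfold nB; omega⟩ ⟨0, by unfold nB; omega⟩ := by
  have hk := kB_pos hx1
  refine ⟨(by simp only [ne_eq, Fin.mk.injEq]; omega), Set.mem_Icc.mpr ?_⟩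
  have h0 : posB x ⟨0, by unfold nB; omega⟩ = 0 := by
    have := posB_even (x := x) 0 (by unfold nB; omega)
    simpa using this
  rw [posB_even, h0]
  have hδ : (0:ℝ) < x - 1 := by linarith
  rw [sub_zero, abs_neg, abs_of_nonneg (by positivity)]
  exact ⟨kB_lb hx1, kB_ub hx1⟩

lemma posB_not_colorable (hx1 : 1 < x) : ¬ (lineGraph x (posB x)).Colorable 2 := by
  intro hcol
  obtain ⟨c⟩ := hcol
  have fin2 : ∀ a b c : Fin 2, a ≠ b → b ≠ c → a = c := by decide
  have hk := kB_pos hx1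
  have key : ∀ j : ℕ, ∀ _ : j ≤ kB x,
      c ⟨2*j, by unfold nB; omega⟩ = c ⟨0, by unfold nB; omega⟩ := by
    intro j
    induction j with
    | zero => intro _; rfl
    | succ m ih =>
      intro hj
      have hm : m < kB x := by omega
      have e1 := c.valid (posB_adj1 hx1 m hm)
      have e2 := c.valid (posB_adj2 hx1 m hm)
      have h3 := fin2 _ _ _ e1 e2
      exact h3.symm.trans (ih hm.le)
  have h1 := key (kB x) le_rfl
  have h2 := c.valid (posB_adj3 hx1)
  exact h2 h1

end CaseB


lemma adj_helper {n : ℕ} (x : ℝ) (pos : Fin n → ℝ) (u v : Fin n) (hne : u ≠ v)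
    (d : ℝ) (hd : pos u - pos v = d) (h1 : 1 ≤ d) (h2 : d ≤ x) :
    (lineGraph x pos).Adj u v :=
  ⟨hne, by rw [hd, abs_of_nonneg (by linarith)]; exact Set.mem_Icc.mpr ⟨h1, h2⟩⟩

/-- For every real `x > 1` there is a finite graph `G ∈ 𝒜_1(1,x)` with clique
number exactly `2` and chromatic number at least `3` (i.e. not `2`-colourable). -/
theorem dim_one_chi_three_omega_two (x : ℝ) (hx : 1 < x) :
    ∃ (n : ℕ) (G : SimpleGraph (Fin n)),
      MemAnnulusFamily 1 1 x G ∧ G.cliqueNum = 2 ∧ ¬ G.Colorable 2 := by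
  rcases le_or_gt ((3:ℝ)/2) x with hge | hlt
  · -- C5 construction
    refine ⟨5, lineGraph x (pos5 x), ?_, ?_, ?_⟩
    · obtain ⟨f, h1, h2⟩ := lineGraph_mem x (pos5 x) (pos5_inj hge)
      exact ⟨f, h1, h2⟩
    · exact cliqueNum_eq_two _ (pos5_adj01 hge) (pos5_cf3 hge)
    · intro hcol
      obtain ⟨c⟩ := hcol
      have fin2 : ∀ a b c : Fin 2, a ≠ b → b ≠ c → a = c := by decide
      have e01 := c.valid (pos5_adj01 hge)
      have e12 := (c.valid (adj_helper x (pos5 x) 2 1 (by decide) x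
        (by simp [pos5]; try ring) (by linarith) le_rfl)).symm
      have e23 := c.valid (adj_helper x (pos5 x) 2 3 (by decide) (x - 1/2)
        (by simp [pos5]; try ring) (by linarith) (by linarith))
      have e34 := c.valid (adj_helper x (pos5 x) 3 4 (by decide) 1
        (by simp [pos5]; try ring) le_rfl (by linarith))
      have e40 := c.valid (adj_helper x (pos5 x) 4 0 (by decide) (x - 1/2)
        (by simp [pos5]; try ring) (by linarith) (by linarith))
      have h02 := fin2 _ _ _ e01 e12
      have h24 := fin2 _ _ _ e23 e34
      exact e40 (h02.trans h24).symm
  · -- odd cycle construction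
    refine ⟨nB x, lineGraph x (posB x), ?_, ?_, posB_not_colorable hx⟩
    · obtain ⟨f, h1, h2⟩ := lineGraph_mem x (posB x) (posB_inj hx)
      exact ⟨f, h1, h2⟩
    · exact cliqueNum_eq_two _ (posB_adj1 hx 0 (kB_pos hx)) (cf3_small x (by linarith) _)
end

section
/- Let a, b ∈ ℝ² be two points with |a − b| > 1. Then every set S of points contained in the intersection of the closed balls B(a,1) ∩ B(b,1) whose points are pairwise at Euclidean distance more than 1 has cardinality at most 2. -/
set_option maxHeartbeats 1600000 in
private lemma key0 (d Tp Sp Tq Sq : ℝ) (hd : 1 < d) (hsp : 0 ≤ Sp) (hspq : Sp ≤ Sq)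
    (h1 : Tp^2+Sp^2 + Tp*(d*d) + (d*d)^2/4 ≤ d*d)
    (h2 : Tp^2+Sp^2 - Tp*(d*d) + (d*d)^2/4 ≤ d*d)
    (h3 : Tq^2+Sq^2 + Tq*(d*d) + (d*d)^2/4 ≤ d*d)
    (h4 : Tq^2+Sq^2 - Tq*(d*d) + (d*d)^2/4 ≤ d*d) :
    (Tp-Tq)^2 + (Sp-Sq)^2 ≤ d*d := by
  set D : ℝ := d*d with hD
  have hD1 : 1 < D := by nlinarith
  have hSpD : Sp^2 ≤ D := by nlinarith [sq_nonneg Tp, sq_nonneg D]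
  have hSqD : Sq^2 ≤ D := by nlinarith [sq_nonneg Tq, sq_nonneg D]
  set A : ℝ := Real.sqrt (D - Sp^2) with hA
  set B : ℝ := Real.sqrt (D - Sq^2) with hB
  have hA2 : A^2 = D - Sp^2 := Real.sq_sqrt (by linarith)
  have hB2 : B^2 = D - Sq^2 := Real.sq_sqrt (by linarith)
  have hA0 : 0 ≤ A := Real.sqrt_nonneg _
  have hB0 : 0 ≤ B := Real.sqrt_nonneg _
  have hTpA : |Tp| + D/2 ≤ A := by
    have h5 : (|Tp| + D/2)^2 ≤ D - Sp^2 := by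
      rcases abs_cases Tp with ⟨h, _⟩ | ⟨h, _⟩ <;> rw [h] <;> nlinarith
    calc |Tp| + D/2 = Real.sqrt ((|Tp| + D/2)^2) := by
          rw [Real.sqrt_sq (by positivity)]
      _ ≤ A := Real.sqrt_le_sqrt h5
  have hTqB : |Tq| + D/2 ≤ B := by
    have h5 : (|Tq| + D/2)^2 ≤ D - Sq^2 := by
      rcases abs_cases Tq with ⟨h, _⟩ | ⟨h, _⟩ <;> rw [h] <;> nlinarith
    calc |Tq| + D/2 = Real.sqrt ((|Tq| + D/2)^2) := by
          rw [Real.sqrt_sq (by positivity)]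
      _ ≤ B := Real.sqrt_le_sqrt h5
  have hAd : A ≤ d := by
    calc A ≤ Real.sqrt D := Real.sqrt_le_sqrt (by linarith [sq_nonneg Sp])
      _ = d := by rw [hD, Real.sqrt_mul_self (by linarith)]
  have habs : |Tp - Tq| ≤ A + B - D := by
    calc |Tp - Tq| ≤ |Tp| + |Tq| := abs_sub _ _
      _ ≤ A + B - D := by linarith [abs_nonneg Tp, abs_nonneg Tq]
  have hABD : 0 ≤ A + B - D := le_trans (abs_nonneg _) habs
  have hT2 : (Tp - Tq)^2 ≤ (A + B - D)^2 := by
    rcases abs_le.mp habs with ⟨hl, hr⟩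
    exact sq_le_sq' hl hr
  have hS2 : (Sp - Sq)^2 ≤ A^2 - B^2 := by
    rw [hA2, hB2]; nlinarith
  have hT2' : (A + B - D)^2 ≤ (A + B - d)^2 := by
    have h6 : A + B - D ≤ A + B - d := by nlinarith
    nlinarith
  have hfinal : (A + B - d)^2 + A^2 - B^2 ≤ D := by
    nlinarith [mul_nonneg (by linarith : (0:ℝ) ≤ A + B) (by linarith : 0 ≤ d - A)]
  linarith

private lemma key (d Tp Sp Tq Sq : ℝ) (hd : 1 < d) (hs : 0 ≤ Sp * Sq)
    (h1 : Tp^2+Sp^2 + Tp*(d*d) + (d*d)^2/4 ≤ d*d)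
    (h2 : Tp^2+Sp^2 - Tp*(d*d) + (d*d)^2/4 ≤ d*d)
    (h3 : Tq^2+Sq^2 + Tq*(d*d) + (d*d)^2/4 ≤ d*d)
    (h4 : Tq^2+Sq^2 - Tq*(d*d) + (d*d)^2/4 ≤ d*d) :
    (Tp-Tq)^2 + (Sp-Sq)^2 ≤ d*d := by
  have hprod : Sp * Sq = |Sp| * |Sq| := by
    rw [← abs_mul, abs_of_nonneg hs]
  have heq : (Sp - Sq)^2 = (|Sp| - |Sq|)^2 := by
    have := sq_abs Sp; have := sq_abs Sq; nlinarith [hprod]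
  rw [heq]
  rcases le_total (|Sp|) (|Sq|) with h | h
  · have := key0 d Tp (|Sp|) Tq (|Sq|) hd (abs_nonneg _) h
      (by rw [sq_abs]; exact h1) (by rw [sq_abs]; exact h2)
      (by rw [sq_abs]; exact h3) (by rw [sq_abs]; exact h4)
    linarith [this]
  · have := key0 d Tq (|Sq|) Tp (|Sp|) hd (abs_nonneg _) h
      (by rw [sq_abs]; exact h3) (by rw [sq_abs]; exact h4)
      (by rw [sq_abs]; exact h1) (by rw [sq_abs]; exact h2)
    nlinarith [this]

private lemma lens_real (a0 a1 b0 b1 p0 p1 q0 q1 d : ℝ)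
    (hD : d*d = (b0-a0)^2+(b1-a1)^2) (hd : 1 < d)
    (hpa : (p0-a0)^2+(p1-a1)^2 ≤ 1) (hpb : (p0-b0)^2+(p1-b1)^2 ≤ 1)
    (hqa : (q0-a0)^2+(q1-a1)^2 ≤ 1) (hqb : (q0-b0)^2+(q1-b1)^2 ≤ 1)
    (hsign : 0 ≤ ((p1-(a1+b1)/2)*(b0-a0)-(p0-(a0+b0)/2)*(b1-a1)) *
      ((q1-(a1+b1)/2)*(b0-a0)-(q0-(a0+b0)/2)*(b1-a1))) :
    (p0-q0)^2+(p1-q1)^2 ≤ 1 := by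
  have hDpos : (0:ℝ) < d*d := by nlinarith
  set Tp := (p0 - (a0+b0)/2) * (b0-a0) + (p1 - (a1+b1)/2) * (b1-a1) with hTpd
  set Sp := (p1 - (a1+b1)/2) * (b0-a0) - (p0 - (a0+b0)/2) * (b1-a1) with hSpd
  set Tq := (q0 - (a0+b0)/2) * (b0-a0) + (q1 - (a1+b1)/2) * (b1-a1) with hTqd
  set Sq := (q1 - (a1+b1)/2) * (b0-a0) - (q0 - (a0+b0)/2) * (b1-a1) with hSqd
  have e1 : Tp^2+Sp^2 + Tp*(d*d) + (d*d)^2/4 - (d*d)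
      = ((p0-a0)^2+(p1-a1)^2 - 1) * (d*d) := by rw [hD]; ring
  have e2 : Tp^2+Sp^2 - Tp*(d*d) + (d*d)^2/4 - (d*d)
      = ((p0-b0)^2+(p1-b1)^2 - 1) * (d*d) := by rw [hD]; ring
  have e3 : Tq^2+Sq^2 + Tq*(d*d) + (d*d)^2/4 - (d*d)
      = ((q0-a0)^2+(q1-a1)^2 - 1) * (d*d) := by rw [hD]; ring
  have e4 : Tq^2+Sq^2 - Tq*(d*d) + (d*d)^2/4 - (d*d)
      = ((q0-b0)^2+(q1-b1)^2 - 1) * (d*d) := by rw [hD]; ring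
  have h1 : Tp^2+Sp^2 + Tp*(d*d) + (d*d)^2/4 ≤ d*d := by
    linarith [e1, mul_nonpos_of_nonpos_of_nonneg (by linarith : (p0-a0)^2+(p1-a1)^2 - 1 ≤ 0) hDpos.le]
  have h2 : Tp^2+Sp^2 - Tp*(d*d) + (d*d)^2/4 ≤ d*d := by
    linarith [e2, mul_nonpos_of_nonpos_of_nonneg (by linarith : (p0-b0)^2+(p1-b1)^2 - 1 ≤ 0) hDpos.le]
  have h3 : Tq^2+Sq^2 + Tq*(d*d) + (d*d)^2/4 ≤ d*d := by
    linarith [e3, mul_nonpos_of_nonpos_of_nonneg (by linarith : (q0-a0)^2+(q1-a1)^2 - 1 ≤ 0) hDpos.le]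
  have h4 : Tq^2+Sq^2 - Tq*(d*d) + (d*d)^2/4 ≤ d*d := by
    linarith [e4, mul_nonpos_of_nonpos_of_nonneg (by linarith : (q0-b0)^2+(q1-b1)^2 - 1 ≤ 0) hDpos.le]
  have hk := key d Tp Sp Tq Sq hd hsign h1 h2 h3 h4
  have e5 : (Tp-Tq)^2 + (Sp-Sq)^2 = ((p0-q0)^2+(p1-q1)^2) * (d*d) := by rw [hD]; ring
  exact le_of_mul_le_mul_right (by linarith [hk, e5]) hDpos

private lemma dsq (x y : EuclideanSpace ℝ (Fin 2)) :
    dist x y ^ 2 = (x 0 - y 0)^2 + (x 1 - y 1)^2 := by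
  rw [EuclideanSpace.dist_eq, Real.sq_sqrt (by positivity)]
  simp [Fin.sum_univ_two, Real.dist_eq, sq_abs]

private lemma lens_pair (a b p q : EuclideanSpace ℝ (Fin 2)) (hab : 1 < dist a b)
    (hpa : dist p a ≤ 1) (hpb : dist p b ≤ 1)
    (hqa : dist q a ≤ 1) (hqb : dist q b ≤ 1)
    (hsign : 0 ≤ ((p 1 - (a 1 + b 1)/2) * (b 0 - a 0) - (p 0 - (a 0 + b 0)/2) * (b 1 - a 1)) *
      ((q 1 - (a 1 + b 1)/2) * (b 0 - a 0) - (q 0 - (a 0 + b 0)/2) * (b 1 - a 1))) :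
    dist p q ≤ 1 := by
  have sq_le : ∀ x y : EuclideanSpace ℝ (Fin 2), dist x y ≤ 1 →
      (x 0 - y 0)^2 + (x 1 - y 1)^2 ≤ 1 := by
    intro x y h
    rw [← dsq]
    nlinarith [dist_nonneg (x := x) (y := y)]
  have hD : dist a b * dist a b = (b 0 - a 0)^2 + (b 1 - a 1)^2 := by
    have h := dsq a b; linear_combination h
  have hres := lens_real (a 0) (a 1) (b 0) (b 1) (p 0) (p 1) (q 0) (q 1) (dist a b)
    hD hab (sq_le p a hpa) (sq_le p b hpb) (sq_le q a hqa) (sq_le q b hqb) hsign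
  have h2 : dist p q ^ 2 ≤ 1 := by rw [dsq]; exact hres
  nlinarith [dist_nonneg (x := p) (y := q)]

/-- If `a, b ∈ ℝ²` are at distance more than `1`, then any set of points of
`B(a,1) ∩ B(b,1)` which are pairwise at distance more than `1` has at most
two elements. -/
theorem two_balls_at_most_two_far_points (a b : EuclideanSpace ℝ (Fin 2))
    (hab : 1 < dist a b) (S : Set (EuclideanSpace ℝ (Fin 2)))
    (hS : S ⊆ Metric.closedBall a 1 ∩ Metric.closedBall b 1)
    (hfar : ∀ p ∈ S, ∀ q ∈ S, p ≠ q → 1 < dist p q) :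
    S.Finite ∧ S.ncard ≤ 2 := by
  set sg : EuclideanSpace ℝ (Fin 2) → ℝ := fun x =>
    (x 1 - (a 1 + b 1)/2) * (b 0 - a 0) - (x 0 - (a 0 + b 0)/2) * (b 1 - a 1) with hsg
  have pair : ∀ p ∈ S, ∀ q ∈ S, p ≠ q → ¬ (0 ≤ sg p * sg q) := by
    intro p hp q hq hne h
    have h1 := (hS hp).1; have h2 := (hS hp).2
    have h3 := (hS hq).1; have h4 := (hS hq).2
    rw [Metric.mem_closedBall] at h1 h2 h3 h4
    have := lens_pair a b p q hab h1 h2 h3 h4 h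
    exact absurd (hfar p hp q hq hne) (not_lt.mpr this)
  have three : ∀ p ∈ S, ∀ q ∈ S, ∀ r ∈ S, p = q ∨ p = r ∨ q = r := by
    intro p hp q hq r hr
    by_contra h
    push_neg at h
    obtain ⟨h1, h2, h3⟩ := h
    have hpq := pair p hp q hq h1
    have hpr := pair p hp r hr h2
    have hqr := pair q hq r hr h3
    push_neg at hpq hpr hqr
    obtain ⟨x, hx⟩ : ∃ x, sg p = x := ⟨_, rfl⟩
    obtain ⟨y, hy⟩ : ∃ y, sg q = y := ⟨_, rfl⟩
    obtain ⟨z, hz⟩ : ∃ z, sg r = z := ⟨_, rfl⟩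
    rw [hx, hy] at hpq
    rw [hx, hz] at hpr
    rw [hy, hz] at hqr
    nlinarith [mul_neg_of_pos_of_neg (mul_pos_of_neg_of_neg hpq hpr) hqr, sq_nonneg (x*y*z)]
  rcases S.eq_empty_or_nonempty with rfl | ⟨p, hp⟩
  · simp
  by_cases hq : ∃ q ∈ S, q ≠ p
  · obtain ⟨q, hq, hqp⟩ := hq
    have hsub : S ⊆ {p, q} := by
      intro r hr
      rcases three p hp q hq r hr with h | h | h
      · exact absurd h.symm hqp
      · exact Or.inl h.symm
      · exact Or.inr h.symm
    have hfin : S.Finite := ((Set.finite_singleton q).insert p).subset hsub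
    refine ⟨hfin, ?_⟩
    calc S.ncard ≤ ({p, q} : Set _).ncard :=
          Set.ncard_le_ncard hsub ((Set.finite_singleton q).insert p)
      _ ≤ 2 := by
          calc ({p, q} : Set _).ncard ≤ ({q} : Set _).ncard + 1 := Set.ncard_insert_le _ _
            _ ≤ 2 := by simp
  · push_neg at hq
    have hsub : S ⊆ {p} := fun r hr => hq r hr
    refine ⟨(Set.finite_singleton p).subset hsub, ?_⟩
    calc S.ncard ≤ ({p} : Set _).ncard := Set.ncard_le_ncard hsub (Set.finite_singleton p)
      _ ≤ 2 := by simp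
end

section
/- Fix an integer d ≥ 3 and two points a, b ∈ ℝ^d with |a − b| > 1. Then there exists γ₀ ∈ (0,1) such that for every γ ∈ (γ₀, 1): every finite set S of points contained in the intersection of the closed balls B(a,1) ∩ B(b,1) whose points are pairwise at Euclidean distance more than 1 satisfies |S| < N_γ, i.e. there is no set of N_γ such points. -/
/-- `N γ d`: the maximal number of points in the closed ball `B(0,γ) ⊆ ℝ^d`
that are pairwise at Euclidean distance more than `1`. -/
noncomputable def Ngamma (d : ℕ) (γ : ℝ) : ℕ :=
  sSup {n : ℕ | ∃ S : Finset (EuclideanSpace ℝ (Fin d)), S.card = n ∧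
    (↑S : Set (EuclideanSpace ℝ (Fin d))) ⊆ Metric.closedBall 0 γ ∧
    ∀ p ∈ S, ∀ q ∈ S, p ≠ q → 1 < dist p q}

set_option maxHeartbeats 1000000

open Metric Finset
open scoped RealInnerProductSpace

private lemma bddAbove_Ngamma_set (d : ℕ) (γ : ℝ) :
    BddAbove {n : ℕ | ∃ S : Finset (EuclideanSpace ℝ (Fin d)), S.card = n ∧
      (↑S : Set (EuclideanSpace ℝ (Fin d))) ⊆ Metric.closedBall 0 γ ∧
      ∀ p ∈ S, ∀ q ∈ S, p ≠ q → 1 < dist p q} := by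
  classical
  obtain ⟨t, htf, hcov⟩ :=
    totallyBounded_iff.mp
      (isCompact_closedBall (0 : EuclideanSpace ℝ (Fin d)) γ).totallyBounded (1/2)
      (by norm_num)
  refine ⟨htf.toFinset.card, ?_⟩
  rintro n ⟨S, rfl, hSb, hsep⟩
  set f : EuclideanSpace ℝ (Fin d) → EuclideanSpace ℝ (Fin d) :=
    fun p => if h : ∃ y ∈ t, p ∈ ball y (1/2) then h.choose else p with hfdef
  have hmem : ∀ p ∈ S, ∃ y ∈ t, p ∈ ball y (1/2) := by
    intro p hp
    have := hcov (hSb hp)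
    simpa using this
  have hf1 : ∀ p ∈ S, f p ∈ t ∧ p ∈ ball (f p) (1/2) := by
    intro p hp
    have h := hmem p hp
    simp only [hfdef, dif_pos h]
    exact ⟨h.choose_spec.1, h.choose_spec.2⟩
  apply Finset.card_le_card_of_injOn f
  · intro p hp
    simpa [Set.Finite.mem_toFinset] using (hf1 p hp).1
  · intro p hp q hq heq
    by_contra hne
    have h1 := (hf1 p (by simpa using hp)).2
    have h2 := (hf1 q (by simpa using hq)).2
    rw [heq] at h1
    have : dist p q < 1 := by
      have := dist_triangle p (f q) q
      rw [mem_ball] at h1 h2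
      rw [dist_comm q (f q)] at h2
      linarith [dist_comm p (f q) ▸ h1]
    have := hsep p (by simpa using hp) q (by simpa using hq) hne
    linarith

/-- For `d ≥ 3` and points `a, b ∈ ℝ^d` at distance more than `1`, there is
`γ₀ ∈ (0,1)` such that for every `γ ∈ (γ₀,1)`, every finite set of points of
`B(a,1) ∩ B(b,1)` pairwise at distance more than `1` has fewer than `N_γ`
elements. -/
theorem two_balls_lt_Ngamma (d : ℕ) (hd : 3 ≤ d) (a b : EuclideanSpace ℝ (Fin d))
    (hab : 1 < dist a b) :
    ∃ γ₀ : ℝ, 0 < γ₀ ∧ γ₀ < 1 ∧ ∀ γ : ℝ, γ₀ < γ → γ < 1 →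
      ∀ S : Finset (EuclideanSpace ℝ (Fin d)),
        (↑S : Set (EuclideanSpace ℝ (Fin d))) ⊆
          Metric.closedBall a 1 ∩ Metric.closedBall b 1 →
        (∀ p ∈ S, ∀ q ∈ S, p ≠ q → 1 < dist p q) →
        S.card < Ngamma d γ := by
  classical
  set t : ℝ := dist a b with htdef
  set τ : ℝ := min t (3/2) with hτdef
  have ht1 : 1 < t := hab
  have hτ1 : 1 < τ := lt_min hab (by norm_num)
  have hτ32 : τ ≤ 3/2 := min_le_right _ _
  have hτt : τ ≤ t := min_le_left _ _
  set δ : ℝ := τ - 1 with hδdef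
  have hδ0 : 0 < δ := by rw [hδdef]; linarith
  have hδ12 : δ ≤ 1/2 := by rw [hδdef]; linarith
  refine ⟨1 - δ/8, by linarith, by linarith, ?_⟩
  intro γ hγl hγu S hSsub hSsep
  have hγ0 : (0:ℝ) < γ := by linarith
  have hba : ‖b - a‖ = t := (dist_eq_norm' a b).symm
  have ht0 : t ≠ 0 := by linarith
  set u : EuclideanSpace ℝ (Fin d) := ‖b - a‖⁻¹ • (b - a) with hudef
  have hu : ‖u‖ = 1 := by
    rw [hudef, norm_smul, norm_inv, norm_norm, hba]
    field_simp
  set m : EuclideanSpace ℝ (Fin d) := midpoint ℝ a b with hmdef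
  have hma : m - a = (t/2) • u := by
    rw [hmdef, midpoint_sub_left, hudef, hba, smul_smul, invOf_eq_inv]
    congr 1
    field_simp
  set ε : ℝ := δ/8 with hεdef
  set s : ℝ := 2 - τ/2 + ε with hsdef
  set x : EuclideanSpace ℝ (Fin d) := (1/2 - s) • u with hxdef
  set f : EuclideanSpace ℝ (Fin d) → EuclideanSpace ℝ (Fin d) :=
    fun p => p - m + (2⁻¹ : ℝ) • u with hfdef
  have key : ∀ p ∈ S, ‖f p‖ ≤ γ ∧ 1 + ε ≤ dist x (f p) := by
    intro p hp
    have hpmem := hSsub (Finset.mem_coe.mpr hp)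
    have hpa : ‖p - a‖ ≤ 1 := by
      have := hpmem.1
      rwa [mem_closedBall, dist_eq_norm] at this
    have hpb : ‖p - b‖ ≤ 1 := by
      have := hpmem.2
      rwa [mem_closedBall, dist_eq_norm] at this
    set ξ : ℝ := ⟪p - m, u⟫ with hξdef
    have hξsq : ξ^2 ≤ ‖p - m‖^2 := by
      have h := abs_real_inner_le_norm (p - m) u
      rw [hu, mul_one] at h
      nlinarith [abs_nonneg ξ, sq_abs ξ, norm_nonneg (p - m), le_abs_self ξ,
        neg_abs_le ξ]
    have hpa2 : ‖p - m‖^2 + t*ξ + t^2/4 ≤ 1 := by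
      have h1 : p - a = (p - m) + (t/2) • u := by rw [← hma]; abel
      have h3 : ‖(p - m) + (t/2) • u‖^2
          = ‖p - m‖^2 + 2 * ((t/2) * ξ) + ((t/2))^2 := by
        rw [norm_add_sq_real, real_inner_smul_right, norm_smul, Real.norm_eq_abs, hu,
          mul_one, sq_abs, hξdef]
      have h2 : ‖(p - m) + (t/2) • u‖ ≤ 1 := by rw [← h1]; exact hpa
      have h4 : ‖(p - m) + (t/2) • u‖^2 ≤ 1 :=
        pow_le_one₀ (norm_nonneg _) h2
      rw [h3] at h4
      linarith
    have hpb2 : ‖p - m‖^2 - t*ξ + t^2/4 ≤ 1 := by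
      have hmb : m - b = (-(t/2)) • u := by
        have h : m - b = (m - a) - (b - a) := by abel
        have h2 : (b - a) = t • u := by
          rw [hudef, hba, smul_smul, mul_inv_cancel₀ ht0, one_smul]
        rw [h, hma, h2]
        module
      have h1 : p - b = (p - m) + (-(t/2)) • u := by rw [← hmb]; abel
      have h3 : ‖(p - m) + (-(t/2)) • u‖^2
          = ‖p - m‖^2 + 2 * ((-(t/2)) * ξ) + ((t/2))^2 := by
        rw [norm_add_sq_real, real_inner_smul_right, norm_smul, Real.norm_eq_abs, hu,
          mul_one, sq_abs, hξdef]
        ring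
      have h2 : ‖(p - m) + (-(t/2)) • u‖ ≤ 1 := by rw [← h1]; exact hpb
      have h4 : ‖(p - m) + (-(t/2)) • u‖^2 ≤ 1 :=
        pow_le_one₀ (norm_nonneg _) h2
      rw [h3] at h4
      linarith
    have hfnorm : ‖f p‖^2 = ‖p - m‖^2 + ξ + (2⁻¹:ℝ)^2 := by
      rw [hfdef]
      simp only []
      rw [norm_add_sq_real, real_inner_smul_right, norm_smul, Real.norm_eq_abs, hu,
        mul_one, sq_abs, hξdef]
      ring
    constructor
    · -- norm bound
      have hsq : ‖f p‖^2 ≤ γ^2 := by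
        rw [hfnorm]
        rcases le_or_gt 0 ξ with hξ0 | hξ0
        · nlinarith [mul_nonneg (sub_nonneg.mpr ht1.le) hξ0, sq_nonneg (t - τ),
            mul_pos hγ0 hγ0, sq_nonneg (γ - (1 - δ/8))]
        · nlinarith [mul_nonneg (sub_nonneg.mpr ht1.le) (le_of_lt (neg_pos.mpr hξ0)),
            sq_nonneg (t - τ), sq_nonneg (γ - (1 - δ/8))]
      exact le_of_pow_le_pow_left₀ two_ne_zero hγ0.le hsq
    · -- distance to x
      have hsub : f p - x = (p - m) + s • u := by
        rw [hfdef, hxdef]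
        simp only []
        module
      have hinner : ⟪f p - x, u⟫ = ξ + s := by
        rw [hsub, inner_add_left, real_inner_smul_left, real_inner_self_eq_norm_sq, hu,
          hξdef]
        ring
      have h5 : ξ + s ≤ ‖f p - x‖ := by
        have := real_inner_le_norm (f p - x) u
        rw [hinner, hu, mul_one] at this
        exact this
      have hξlb : τ/2 - 1 ≤ ξ := by
        rcases le_or_gt 0 ξ with hξ0 | hξ0
        · linarith
        · nlinarith [sq_nonneg (ξ - t/2 + 1)]
      have : 1 + ε ≤ ‖f p - x‖ := by
        have : 1 + ε ≤ ξ + s := by rw [hsdef]; linarith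
        linarith
      rwa [dist_comm, dist_eq_norm]
  -- the new configuration
  have hxnorm : ‖x‖ ≤ γ := by
    have h1 : ‖x‖ = |1/2 - s| := by rw [hxdef, norm_smul, Real.norm_eq_abs, hu, mul_one]
    have h2 : (1/2 : ℝ) - s < 0 := by rw [hsdef]; linarith
    rw [h1, abs_of_neg h2, hsdef, hεdef, hδdef]
    linarith
  have hfinj : Function.Injective f := by
    intro p q h
    have h' : p - m = q - m := add_right_cancel h
    exact sub_left_inj.mp h'
  have hxnotmem : x ∉ S.image f := by
    intro hx
    obtain ⟨p, hp, hfp⟩ := Finset.mem_image.mp hx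
    have := (key p hp).2
    rw [hfp] at this
    simp at this
    linarith
  set T : Finset (EuclideanSpace ℝ (Fin d)) := insert x (S.image f) with hTdef
  have hTcard : T.card = S.card + 1 := by
    rw [hTdef, Finset.card_insert_of_notMem hxnotmem,
      Finset.card_image_of_injective _ hfinj]
  have hTsub : (↑T : Set (EuclideanSpace ℝ (Fin d))) ⊆ Metric.closedBall 0 γ := by
    intro z hz
    rw [Finset.mem_coe, hTdef, Finset.mem_insert] at hz
    rcases hz with rfl | hz
    · rw [mem_closedBall, dist_eq_norm, sub_zero]; exact hxnorm
    · obtain ⟨p, hp, rfl⟩ := Finset.mem_image.mp hz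
      rw [mem_closedBall, dist_eq_norm, sub_zero]
      exact (key p hp).1
  have hTsep : ∀ p ∈ T, ∀ q ∈ T, p ≠ q → 1 < dist p q := by
    intro p hp q hq hne
    rw [hTdef, Finset.mem_insert] at hp hq
    have hε0 : 0 < ε := by rw [hεdef]; linarith
    rcases hp with rfl | hp
    · rcases hq with rfl | hq
      · exact absurd rfl hne
      · obtain ⟨r, hr, rfl⟩ := Finset.mem_image.mp hq
        linarith [(key r hr).2]
    · rcases hq with rfl | hq
      · obtain ⟨r, hr, rfl⟩ := Finset.mem_image.mp hp
        rw [dist_comm]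
        linarith [(key r hr).2]
      · obtain ⟨r1, hr1, rfl⟩ := Finset.mem_image.mp hp
        obtain ⟨r2, hr2, rfl⟩ := Finset.mem_image.mp hq
        have hner : r1 ≠ r2 := fun h => hne (by rw [h])
        have hdist : dist (f r1) (f r2) = dist r1 r2 := by
          rw [dist_eq_norm, dist_eq_norm, hfdef]
          simp only []
          congr 1
          abel
        rw [hdist]
        exact hSsep r1 hr1 r2 hr2 hner
  have hmem : S.card + 1 ∈ {n : ℕ | ∃ S' : Finset (EuclideanSpace ℝ (Fin d)),
      S'.card = n ∧ (↑S' : Set (EuclideanSpace ℝ (Fin d))) ⊆ Metric.closedBall 0 γ ∧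
      ∀ p ∈ S', ∀ q ∈ S', p ≠ q → 1 < dist p q} := ⟨T, hTcard, hTsub, hTsep⟩
  have hle : S.card + 1 ≤ Ngamma d γ := le_csSup (bddAbove_Ngamma_set d γ) hmem
  omega
end

section
/- For every integer d ≥ 3 and every real γ ∈ [0.99, 1), there exist 2d + 2 points in the closed ball B(0,γ) ⊆ ℝ^d that are pairwise at Euclidean distance more than 1; in other words, N_γ ≥ 2d + 2. -/
open Finset

noncomputable def sgn' (t : Bool) : ℝ := if t then 1 else -1

lemma sgn'_mul_sq (t : Bool) (x : ℝ) : (sgn' t * x) ^ 2 = x ^ 2 := by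
  cases t <;> simp [sgn']

lemma sgn'_sub_sq (t t' : Bool) (h : t ≠ t') (x : ℝ) :
    (sgn' t * x - sgn' t' * x) ^ 2 = 4 * x ^ 2 := by
  cases t <;> cases t' <;> simp_all [sgn'] <;> ring

noncomputable def pt1 (d : ℕ) (i : Fin d) (t : Bool) (r : ℝ) :
    EuclideanSpace ℝ (Fin d) :=
  (WithLp.equiv 2 _).symm (fun j => if j = i then sgn' t * r else 0)

noncomputable def pt3 (d : ℕ) (a b c : Fin d) (η : Bool × Bool × Bool) (s : ℝ) :
    EuclideanSpace ℝ (Fin d) :=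
  (WithLp.equiv 2 _).symm (fun j =>
    if j = a then sgn' η.1 * s else if j = b then sgn' η.2.1 * s
    else if j = c then sgn' η.2.2 * s else 0)

lemma pt1_apply (d : ℕ) (i : Fin d) (t : Bool) (r : ℝ) (j : Fin d) :
    pt1 d i t r j = if j = i then sgn' t * r else 0 := rfl

lemma pt3_apply (d : ℕ) (a b c : Fin d) (η : Bool × Bool × Bool) (s : ℝ) (j : Fin d) :
    pt3 d a b c η s j =
      if j = a then sgn' η.1 * s else if j = b then sgn' η.2.1 * s
      else if j = c then sgn' η.2.2 * s else 0 := rfl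

/-- For every `d ≥ 3` and every `γ ∈ [0.99, 1)`, there are `2d + 2` points in the
closed ball `B(0,γ) ⊆ ℝ^d` pairwise at Euclidean distance more than `1`. -/
theorem Ngamma_ge_two_d_plus_two (d : ℕ) (hd : 3 ≤ d) (γ : ℝ)
    (hγ1 : 0.99 ≤ γ) (hγ2 : γ < 1) :
    ∃ S : Finset (EuclideanSpace ℝ (Fin d)), S.card = 2 * d + 2 ∧
      (↑S : Set (EuclideanSpace ℝ (Fin d))) ⊆ Metric.closedBall 0 γ ∧
      ∀ p ∈ S, ∀ q ∈ S, p ≠ q → 1 < dist p q := by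
  classical
  have hγ0 : (0:ℝ) ≤ γ := by linarith
  set r : ℝ := 3/4 with hr
  set s : ℝ := 11/20 with hs
  obtain ⟨a, ha⟩ : ∃ a : Fin d, (a : ℕ) = d - 3 := ⟨⟨d - 3, by omega⟩, rfl⟩
  obtain ⟨b, hb⟩ : ∃ b : Fin d, (b : ℕ) = d - 2 := ⟨⟨d - 2, by omega⟩, rfl⟩
  obtain ⟨c, hc⟩ : ∃ c : Fin d, (c : ℕ) = d - 1 := ⟨⟨d - 1, by omega⟩, rfl⟩
  have hle : d - 3 ≤ d := Nat.sub_le d 3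
  set ι : Fin (d - 3) → Fin d := fun i => Fin.castLE hle i with hidef
  have hιval : ∀ i : Fin (d - 3), ((ι i : Fin d) : ℕ) = (i : ℕ) := fun i => rfl
  have hιa : ∀ i, ι i ≠ a := by
    intro i h
    have h2 := congrArg Fin.val h
    rw [hιval, ha] at h2
    have := i.isLt
    omega
  have hιb : ∀ i, ι i ≠ b := by
    intro i h
    have h2 := congrArg Fin.val h
    rw [hιval, hb] at h2
    have := i.isLt
    omega
  have hιc : ∀ i, ι i ≠ c := by
    intro i h
    have h2 := congrArg Fin.val h
    rw [hιval, hc] at h2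
    have := i.isLt
    omega
  have hab : a ≠ b := fun h => by rw [Fin.ext_iff, ha, hb] at h; omega
  have hac : a ≠ c := fun h => by rw [Fin.ext_iff, ha, hc] at h; omega
  have hbc : b ≠ c := fun h => by rw [Fin.ext_iff, hb, hc] at h; omega
  have hιinj : Function.Injective ι := fun i j h => by
    have := congrArg Fin.val h
    rw [hιval, hιval] at this
    exact Fin.ext this
  -- distance via sums of squares
  have dist_sq : ∀ p q : EuclideanSpace ℝ (Fin d),
      dist p q = Real.sqrt (∑ j, (p j - q j) ^ 2) := by
    intro p q
    rw [EuclideanSpace.dist_eq]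
    congr 1
    exact Finset.sum_congr rfl fun j _ => by rw [Real.dist_eq, sq_abs]
  have one_lt_dist : ∀ p q : EuclideanSpace ℝ (Fin d),
      (1:ℝ) < ∑ j, (p j - q j) ^ 2 → 1 < dist p q := by
    intro p q h
    rw [dist_sq]
    exact (Real.lt_sqrt (by norm_num)).mpr (by rwa [one_pow])
  have mem_ball : ∀ p : EuclideanSpace ℝ (Fin d),
      (∑ j, (p j) ^ 2) ≤ γ ^ 2 → p ∈ Metric.closedBall (0 : EuclideanSpace ℝ (Fin d)) γ := by
    intro p h
    rw [Metric.mem_closedBall, dist_sq]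
    have h0 : ∑ j, (p j - (0 : EuclideanSpace ℝ (Fin d)) j) ^ 2 = ∑ j, (p j) ^ 2 := by
      refine Finset.sum_congr rfl fun j _ => ?_
      norm_num
    rw [h0]
    calc Real.sqrt (∑ j, (p j) ^ 2) ≤ Real.sqrt (γ ^ 2) := Real.sqrt_le_sqrt h
      _ = γ := Real.sqrt_sq hγ0
  -- the indexing map
  set F : (Fin (d - 3) × Bool) ⊕ (Bool × Bool × Bool) → EuclideanSpace ℝ (Fin d) :=
    Sum.elim (fun p => pt1 d (ι p.1) p.2 r) (fun η => pt3 d a b c η s) with hF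
  -- mixed distance
  have hmix : ∀ (i : Fin (d - 3)) (t : Bool) (η : Bool × Bool × Bool),
      1 < dist (pt1 d (ι i) t r) (pt3 d a b c η s) := by
    intro i t η
    apply one_lt_dist
    have hsub : ({ι i, a, b, c} : Finset (Fin d)) ⊆ Finset.univ := Finset.subset_univ _
    refine lt_of_lt_of_le ?_
      (Finset.sum_le_sum_of_subset_of_nonneg hsub (fun j _ _ => sq_nonneg _))
    have hmem1 : ι i ∉ ({a, b, c} : Finset (Fin d)) := by
      simp [Finset.mem_insert, hιa i, hιb i, hιc i]
    have hmem2 : a ∉ ({b, c} : Finset (Fin d)) := by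
      simp [Finset.mem_insert, hab, hac]
    have hmem3 : b ∉ ({c} : Finset (Fin d)) := by simp [hbc]
    rw [show ({ι i, a, b, c} : Finset (Fin d)) = insert (ι i) (insert a (insert b {c})) from rfl,
      Finset.sum_insert hmem1, Finset.sum_insert hmem2, Finset.sum_insert hmem3,
      Finset.sum_singleton]
    rw [pt1_apply, pt3_apply, if_pos rfl, if_neg (hιa i), if_neg (hιb i), if_neg (hιc i)]
    rw [pt1_apply, pt3_apply, if_neg (fun h : a = ι i => hιa i h.symm), if_pos rfl]
    rw [pt1_apply, pt3_apply, if_neg (fun h : b = ι i => hιb i h.symm),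
      if_neg (fun h : b = a => hab h.symm), if_pos rfl]
    rw [pt1_apply, pt3_apply, if_neg (fun h : c = ι i => hιc i h.symm),
      if_neg (fun h : c = a => hac h.symm), if_neg (fun h : c = b => hbc h.symm), if_pos rfl]
    rw [sub_zero, zero_sub, zero_sub, zero_sub, neg_sq, neg_sq, neg_sq,
      sgn'_mul_sq, sgn'_mul_sq, sgn'_mul_sq, sgn'_mul_sq]
    rw [hr, hs]; norm_num
  -- the key pairwise distance fact
  have key : ∀ x y, x ≠ y → 1 < dist (F x) (F y) := by
    rintro (⟨i, t⟩ | η) (⟨i', t'⟩ | η') hxy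
    · -- cross vs cross
      simp only [hF, Sum.elim_inl]
      rcases eq_or_ne i i' with rfl | hii
      · have ht : t ≠ t' := by
          intro h; exact hxy (by rw [h])
        apply one_lt_dist
        refine lt_of_lt_of_le ?_
          (Finset.single_le_sum (f := fun j => (pt1 d (ι i) t r j - pt1 d (ι i) t' r j) ^ 2)
            (fun j _ => sq_nonneg _) (Finset.mem_univ (ι i)))
        beta_reduce
        rw [pt1_apply, pt1_apply, if_pos rfl, if_pos rfl, sgn'_sub_sq _ _ ht]
        rw [hr]; norm_num
      · have hne : ι i ≠ ι i' := fun h => hii (hιinj h)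
        apply one_lt_dist
        refine lt_of_lt_of_le ?_
          (Finset.sum_le_sum_of_subset_of_nonneg (Finset.subset_univ {ι i, ι i'})
            (fun j _ _ => sq_nonneg _))
        rw [Finset.sum_pair hne]
        rw [pt1_apply, pt1_apply, pt1_apply, pt1_apply, if_pos rfl, if_pos rfl,
          if_neg hne, if_neg hne.symm]
        rw [sub_zero, zero_sub, neg_sq, sgn'_mul_sq, sgn'_mul_sq]
        rw [hr]; norm_num
    · simp only [hF, Sum.elim_inl, Sum.elim_inr]
      exact hmix i t η'
    · simp only [hF, Sum.elim_inl, Sum.elim_inr]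
      rw [dist_comm]
      exact hmix i' t' η
    · -- cube vs cube
      simp only [hF, Sum.elim_inr]
      obtain ⟨u, v, w⟩ := η
      obtain ⟨u', v', w'⟩ := η'
      apply one_lt_dist
      by_cases hu : u = u'
      · by_cases hv : v = v'
        · have hw : w ≠ w' := by
            intro h; exact hxy (by rw [hu, hv, h])
          refine lt_of_lt_of_le ?_
            (Finset.single_le_sum
              (f := fun j => (pt3 d a b c (u,v,w) s j - pt3 d a b c (u',v',w') s j) ^ 2)
              (fun j _ => sq_nonneg _) (Finset.mem_univ c))
          beta_reduce
          rw [pt3_apply, pt3_apply, if_neg (fun h : c = a => hac h.symm),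
            if_neg (fun h : c = a => hac h.symm),
            if_neg (fun h : c = b => hbc h.symm), if_neg (fun h : c = b => hbc h.symm),
            if_pos rfl, if_pos rfl]
          rw [sgn'_sub_sq _ _ hw, hs]; norm_num
        · refine lt_of_lt_of_le ?_
            (Finset.single_le_sum
              (f := fun j => (pt3 d a b c (u,v,w) s j - pt3 d a b c (u',v',w') s j) ^ 2)
              (fun j _ => sq_nonneg _) (Finset.mem_univ b))
          beta_reduce
          rw [pt3_apply, pt3_apply, if_neg (fun h : b = a => hab h.symm),
            if_neg (fun h : b = a => hab h.symm), if_pos rfl, if_pos rfl]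
          rw [sgn'_sub_sq _ _ hv, hs]; norm_num
      · refine lt_of_lt_of_le ?_
          (Finset.single_le_sum
            (f := fun j => (pt3 d a b c (u,v,w) s j - pt3 d a b c (u',v',w') s j) ^ 2)
            (fun j _ => sq_nonneg _) (Finset.mem_univ a))
        beta_reduce
        rw [pt3_apply, pt3_apply, if_pos rfl, if_pos rfl]
        rw [sgn'_sub_sq _ _ hu, hs]; norm_num
  have hFinj : Function.Injective F := by
    intro x y h
    by_contra hne
    have h1 := key x y hne
    rw [h, dist_self] at h1
    norm_num at h1
  refine ⟨Finset.image F Finset.univ, ?_, ?_, ?_⟩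
  · rw [Finset.card_image_of_injective _ hFinj, Finset.card_univ]
    simp only [Fintype.card_sum, Fintype.card_prod, Fintype.card_bool, Fintype.card_fin]
    omega
  · intro p hp
    rw [Finset.mem_coe, Finset.mem_image] at hp
    obtain ⟨x, -, rfl⟩ := hp
    rcases x with ⟨i, t⟩ | η
    · simp only [hF, Sum.elim_inl]
      apply mem_ball
      have hsum : ∑ j, (pt1 d (ι i) t r j) ^ 2 = r ^ 2 := by
        have : ∀ j : Fin d, (pt1 d (ι i) t r j) ^ 2 = if j = ι i then r ^ 2 else 0 := by
          intro j
          rw [pt1_apply]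
          split_ifs with h
          · exact sgn'_mul_sq t r
          · norm_num
        rw [Finset.sum_congr rfl fun j _ => this j, Finset.sum_ite_eq' Finset.univ (ι i)]
        simp
      rw [hsum, hr]
      nlinarith
    · simp only [hF, Sum.elim_inr]
      apply mem_ball
      have hsupp : ∀ j ∉ ({a, b, c} : Finset (Fin d)), (pt3 d a b c η s j) ^ 2 = 0 := by
        intro j hj
        simp only [Finset.mem_insert, Finset.mem_singleton, not_or] at hj
        rw [pt3_apply, if_neg hj.1, if_neg hj.2.1, if_neg hj.2.2]
        norm_num
      have hsum : ∑ j, (pt3 d a b c η s j) ^ 2 = 3 * s ^ 2 := by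
        rw [← Finset.sum_subset (Finset.subset_univ ({a, b, c} : Finset (Fin d)))
          (fun x _ hx => hsupp x hx)]
        have hmem2 : a ∉ ({b, c} : Finset (Fin d)) := by
          simp [Finset.mem_insert, hab, hac]
        have hmem3 : b ∉ ({c} : Finset (Fin d)) := by simp [hbc]
        rw [show ({a, b, c} : Finset (Fin d)) = insert a (insert b {c}) from rfl,
          Finset.sum_insert hmem2, Finset.sum_insert hmem3, Finset.sum_singleton]
        rw [pt3_apply, if_pos rfl]
        rw [pt3_apply, if_neg (fun h : b = a => hab h.symm), if_pos rfl]
        rw [pt3_apply, if_neg (fun h : c = a => hac h.symm),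
          if_neg (fun h : c = b => hbc h.symm), if_pos rfl]
        rw [sgn'_mul_sq, sgn'_mul_sq, sgn'_mul_sq]
        ring
      rw [hsum, hs]
      nlinarith
  · intro p hp q hq hpq
    rw [Finset.mem_image] at hp hq
    obtain ⟨x, -, rfl⟩ := hp
    obtain ⟨y, -, rfl⟩ := hq
    exact key x y (fun h => hpq (by rw [h]))
end

section
/- For every integer d ≥ 2 there exists a constant C₃ > 0 such that the following holds for all reals x, y > C₃ with x ≠ y and all integers n ≥ x and k > 1. For every pair of points p₁, p₂ ∈ ℝ^d with |p₁ − p₂| < k·x and max(|p₁|, |p₂|) ≤ n − x − 1, there exists ε₀ > 0 (depending on p₁, p₂, x and k) such that for every ε ∈ (0, ε₀) for which p₁ and p₂ are points of the lattice εℤ^d, and for every (1,y)-annulus embedding f of G_{n,d}(x,ε), one has |f(p₁) − f(p₂)| ≤ k·y. -/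
/-- `p ∈ ℝ^d` is a point of the scaled integer lattice `εℤ^d`. -/
def InLattice {d : ℕ} (ε : ℝ) (p : EuclideanSpace ℝ (Fin d)) : Prop :=
  ∀ i, ∃ z : ℤ, p i = ε * z

/-- The vertex set of `G_{n,d}(x,ε)`: points of `εℤ^d` in the closed ball `B(0,n)`. -/
def GndVert (d n : ℕ) (ε : ℝ) : Type :=
  {p : EuclideanSpace ℝ (Fin d) // InLattice ε p ∧ ‖p‖ ≤ (n : ℝ)}

/-- The graph `G_{n,d}(x,ε)`: two distinct lattice points of `B(0,n)` are adjacent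
iff their Euclidean distance lies in `[1, x]`. Its natural `(1,x)`-annulus
embedding is the identity on the vertex set. -/
def Gnd (d n : ℕ) (x ε : ℝ) : SimpleGraph (GndVert d n ε) where
  Adj u v := u ≠ v ∧ dist u.1 v.1 ∈ Set.Icc 1 x
  symm := ⟨fun u v ⟨h, h'⟩ => ⟨h.symm, by rwa [dist_comm]⟩⟩
  loopless := ⟨fun u h => h.1 rfl⟩

open RealInnerProductSpace

noncomputable def latRound {d : ℕ} (ε : ℝ) (p : EuclideanSpace ℝ (Fin d)) :
    EuclideanSpace ℝ (Fin d) := WithLp.toLp 2 (fun i => ε * (round (p i / ε) : ℤ))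

lemma latRound_inLattice {d : ℕ} (ε : ℝ) (p : EuclideanSpace ℝ (Fin d)) :
    ∀ i, ∃ z : ℤ, latRound ε p i = ε * z := fun i => ⟨_, rfl⟩

lemma latRound_dist {d : ℕ} (ε : ℝ) (hε : 0 < ε) (p : EuclideanSpace ℝ (Fin d)) :
    dist p (latRound ε p) ≤ ε * d := by
  have key : ∀ i, dist (p i) (latRound ε p i) ^ 2 ≤ ε ^ 2 := by
    intro i
    have h1 : |p i / ε - round (p i / ε)| ≤ 1 / 2 := abs_sub_round _
    have h2 : p i - latRound ε p i = ε * (p i / ε - round (p i / ε)) := by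
      rw [show latRound ε p i = ε * (round (p i / ε) : ℤ) from rfl]
      field_simp
    have h3 : |p i - latRound ε p i| ≤ ε := by
      rw [h2, abs_mul, abs_of_pos hε]
      nlinarith [abs_nonneg (p i / ε - round (p i / ε))]
    rw [Real.dist_eq]
    nlinarith [abs_nonneg (p i - latRound ε p i)]
  rw [EuclideanSpace.dist_eq]
  have h4 : ∑ i, dist (p i) (latRound ε p i) ^ 2 ≤ (ε * d) ^ 2 := by
    calc ∑ i, dist (p i) (latRound ε p i) ^ 2 ≤ ∑ _i : Fin d, ε ^ 2 :=
          Finset.sum_le_sum fun i _ => key i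
      _ = d * ε ^ 2 := by simp [mul_comm]
      _ ≤ (ε * d) ^ 2 := by
          have : (1:ℝ) ≤ d ∨ (d:ℝ) = 0 := by
            rcases Nat.eq_zero_or_pos d with h | h
            · exact Or.inr (by exact_mod_cast h)
            · exact Or.inl (by exact_mod_cast h)
          rcases this with h | h
          · nlinarith [sq_nonneg ε]
          · simp [h]
  calc √(∑ i, dist (p i) (latRound ε p i) ^ 2) ≤ √((ε * d) ^ 2) := Real.sqrt_le_sqrt h4
    _ = ε * d := Real.sqrt_sq (by positivity)

lemma exists_orthonormal {d : ℕ} (hd : 2 ≤ d) (u : EuclideanSpace ℝ (Fin d)) :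
    ∃ e : EuclideanSpace ℝ (Fin d), ‖e‖ = 1 ∧ ⟪u, e⟫ = 0 := by
  have hne : (ℝ ∙ u)ᗮ ≠ ⊥ := by
    intro h
    rw [Submodule.orthogonal_eq_bot_iff] at h
    have h2 : Module.finrank ℝ (EuclideanSpace ℝ (Fin d)) = d := finrank_euclideanSpace_fin
    have h1 : Module.finrank ℝ (ℝ ∙ u) ≤ 1 := by
      rcases eq_or_ne u 0 with h0 | h0
      · rw [h0, Submodule.span_zero_singleton]; simp
      · rw [finrank_span_singleton h0]
    rw [h, finrank_top, h2] at h1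
    omega
  obtain ⟨v, hv, hv0⟩ := Submodule.exists_mem_ne_zero_of_ne_bot hne
  have hvn : ‖v‖ ≠ 0 := norm_ne_zero_iff.2 hv0
  refine ⟨‖v‖⁻¹ • v, ?_, ?_⟩
  · rw [norm_smul, Real.norm_eq_abs, abs_of_nonneg (by positivity)]
    field_simp
  · rw [real_inner_smul_right]
    have := (Submodule.mem_orthogonal _ _).1 hv u (Submodule.mem_span_singleton_self u)
    rw [this, mul_zero]

lemma norm_smul_add_smul {d : ℕ} {u e : EuclideanSpace ℝ (Fin d)}
    (hu : ‖u‖ = 1) (he : ‖e‖ = 1) (hue : ⟪u, e⟫ = 0) (a b : ℝ) :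
    ‖a • u + b • e‖ = √(a ^ 2 + b ^ 2) := by
  have h : ‖a • u + b • e‖ ^ 2 = a ^ 2 + b ^ 2 := by
    rw [norm_add_sq_real, norm_smul, norm_smul, real_inner_smul_left, real_inner_smul_right,
      hue, hu, he]
    simp [mul_pow, sq_abs]
  rw [← h, Real.sqrt_sq (norm_nonneg _)]

set_option maxHeartbeats 2000000 in
lemma exists_path_reals (k : ℕ) (hk : 2 ≤ k) (x D : ℝ) (hx : 9 < x) (hD0 : 0 < D)
    (hDkx : D < k * x) :
    ∃ ℓ : ℝ, 1 < ℓ ∧ ℓ < x ∧ ∃ A B : ℕ → ℝ,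
      A 0 = 0 ∧ B 0 = 0 ∧ A k = D ∧ B k = 0 ∧
      (∀ j < k, (A (j+1) - A j) ^ 2 + (B (j+1) - B j) ^ 2 = ℓ ^ 2) ∧
      (∀ j ≤ k, 0 ≤ A j ∧ A j ≤ D + 2) ∧ (∀ j, 0 ≤ B j ∧ B j ≤ 2) := by
  have hkR : (2:ℝ) ≤ (k:ℝ) := by exact_mod_cast hk
  have hkR0 : (0:ℝ) < (k:ℝ) := by linarith
  have hx0 : (0:ℝ) < x := by linarith
  have hDk : D / k < x := (div_lt_iff₀ hkR0).2 (by linarith)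
  set M := max 1 (D / (k:ℝ)) with hMdef
  have hM1 : 1 ≤ M := le_max_left _ _
  have hMD : D / k ≤ M := le_max_right _ _
  have hMx : M < x := max_lt (by linarith) hDk
  set δ := min (1/(9*x)) ((x - M)/2) with hδdef
  have hδ0 : 0 < δ := lt_min (by positivity) (by linarith)
  have hδa : δ ≤ 1/(9*x) := min_le_left _ _
  have hδb : δ ≤ (x - M)/2 := min_le_right _ _
  have hδ81 : δ ≤ 1/81 := le_trans hδa (by rw [div_le_div_iff₀ (by linarith) (by norm_num)]; linarith)
  have hδx : δ * x ≤ 1/9 := by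
    have h := mul_le_mul_of_nonneg_right hδa hx0.le
    have h2 : 1/(9*x) * x = 1/9 := by field_simp
    linarith
  set ℓ := M + δ with hℓdef
  have hℓ1 : 1 < ℓ := by simp only [hℓdef]; linarith
  have hℓx : ℓ < x := by simp only [hℓdef]; linarith
  have hℓ0 : 0 < ℓ := by linarith
  have hDkℓ : D ≤ (k:ℝ) * ℓ := by
    have h1 : D = (k:ℝ) * (D / k) := by field_simp
    have h2 : (k:ℝ) * (D/k) ≤ (k:ℝ) * M := mul_le_mul_of_nonneg_left hMD hkR0.le
    have h3 : (k:ℝ) * M ≤ (k:ℝ) * ℓ := mul_le_mul_of_nonneg_left (by linarith) hkR0.le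
    linarith
  set σ : ℝ := ((k % 2 : ℕ) : ℝ) with hσdef
  have hσcases : σ = 0 ∨ σ = 1 := by
    rcases Nat.mod_two_eq_zero_or_one k with h | h <;> simp [hσdef, h]
  have hσ0 : 0 ≤ σ := by rcases hσcases with h | h <;> rw [h] <;> norm_num
  have hσ1 : σ ≤ 1 := by rcases hσcases with h | h <;> rw [h] <;> norm_num
  have hks0 : 0 < (k:ℝ) - σ := by linarith
  set γ := (D - σ*ℓ)/((k:ℝ) - σ) with hγdef
  clear_value M δ ℓ σ
  have hγmul : ((k:ℝ) - σ) * γ = D - σ * ℓ := by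
    rw [hγdef]; field_simp
  clear_value γ
  have hγle : γ ≤ ℓ := by
    rw [hγdef, div_le_iff₀ hks0]; linarith
  have hγge : -ℓ ≤ γ := by
    rw [hγdef, le_div_iff₀ hks0]
    linarith [mul_le_mul_of_nonneg_right hσ1 hℓ0.le,
      mul_le_mul_of_nonneg_right hkR hℓ0.le, hD0.le]
  set β := Real.sqrt (ℓ^2 - γ^2) with hβdef
  have hβ0 : 0 ≤ β := Real.sqrt_nonneg _
  have hβsq : β^2 = ℓ^2 - γ^2 := Real.sq_sqrt (by linarith [mul_nonneg (sub_nonneg.2 hγle) (by linarith : (0:ℝ) ≤ ℓ + γ)])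
  clear_value β
  clear hβdef
  have hβ2 : β ≤ 2 := by
    have hβsq4 : β^2 ≤ 4 := by
      rcases le_or_gt (k:ℝ) D with hbig | hsmall
      · have hMeq : M = D / k := by
          rw [hMdef]; exact max_eq_right (by rw [le_div_iff₀ hkR0]; linarith)
        have hDeq : D = (k:ℝ) * M := by rw [hMeq]; field_simp
        have hkey : ((k:ℝ) - σ) * (ℓ - γ) = (k:ℝ) * δ := by
          linear_combination (-1 : ℝ) * hγmul - hDeq + (k:ℝ) * hℓdef
        have h1 : ℓ - γ ≤ 2*δ := by nlinarith
        have h2 : ℓ + γ ≤ 2*ℓ := by linarith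
        have e1 : (ℓ-γ)*(ℓ+γ) ≤ (2*δ)*(2*ℓ) :=
          mul_le_mul h1 h2 (by linarith) (by linarith)
        have e2 : δ * ℓ ≤ δ * x := mul_le_mul_of_nonneg_left hℓx.le hδ0.le
        nlinarith
      · have hMeq : M = 1 := by
          rw [hMdef]; exact max_eq_left (by rw [div_le_iff₀ hkR0]; nlinarith)
        have hℓ2 : ℓ ≤ 2 := by rw [hℓdef, hMeq]; linarith
        nlinarith [sq_nonneg γ]
    nlinarith
  have hℓD2 : ℓ ≤ D + 2 := by
    rcases le_or_gt (k:ℝ) D with hbig | hsmall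
    · have hMeq : M = D / k := by
        rw [hMdef]; exact max_eq_right (by rw [le_div_iff₀ hkR0]; linarith)
      have h1 : D / k ≤ D / 2 := div_le_div_of_nonneg_left hD0.le (by norm_num) hkR
      rw [hℓdef, hMeq]; nlinarith
    · have hMeq : M = 1 := by
        rw [hMdef]; exact max_eq_left (by rw [div_le_iff₀ hkR0]; nlinarith)
      rw [hℓdef, hMeq]; linarith
  have hk0 : k ≠ 0 := by omega
  refine ⟨ℓ, hℓ1, hℓx, fun j => if j = 0 then 0 else σ*ℓ + ((j:ℝ) - σ)*γ,
    fun j => if j = 0 then 0 else if Odd (j + k) then β else 0,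
    by simp, by simp, ?_, ?_, ?_, ?_, ?_⟩
  · simp only [if_neg hk0]
    linarith [hγmul]
  · simp only [if_neg hk0, if_neg (by rw [Nat.odd_iff]; omega : ¬ Odd (k + k))]
  · -- step lengths
    intro j hj
    by_cases hj0 : j = 0
    · subst hj0
      rcases Nat.even_or_odd k with hke | hko
      · have hσe : σ = 0 := by simp [hσdef, Nat.even_iff.1 hke]
        have hodd : Odd (0 + 1 + k) := by
          have := Nat.even_iff.1 hke
          rw [Nat.odd_iff]; omega
        simp only [if_neg (by norm_num : ¬ (0+1 = 0)), if_pos hodd, if_pos rfl, hσe]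
        push_cast
        nlinarith [hβsq]
      · have hσo : σ = 1 := by simp [hσdef, Nat.odd_iff.1 hko]
        have hnodd : ¬ Odd (0 + 1 + k) := by
          have := Nat.odd_iff.1 hko
          rw [Nat.odd_iff]; omega
        simp only [if_neg (by norm_num : ¬ (0+1 = 0)), if_neg hnodd, if_pos rfl, hσo]
        push_cast
        ring
    · have hj10 : j + 1 ≠ 0 := by omega
      simp only [if_neg hj0, if_neg hj10]
      rcases Nat.even_or_odd (j + k) with hpar | hpar
      · have h1 : ¬ Odd (j + k) := by
          have := Nat.even_iff.1 hpar
          rw [Nat.odd_iff]; omega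
        have h2 : Odd (j + 1 + k) := by
          have := Nat.even_iff.1 hpar
          rw [Nat.odd_iff]; omega
        simp only [if_neg h1, if_pos h2]
        push_cast
        linear_combination hβsq
      · have h1 : ¬ Odd (j + 1 + k) := by
          have := Nat.odd_iff.1 hpar
          rw [Nat.odd_iff]; omega
        simp only [if_pos hpar, if_neg h1]
        push_cast
        linear_combination hβsq
  · -- A bounds
    intro j hjk
    by_cases hj0 : j = 0
    · subst hj0
      refine ⟨by simp, by simp; linarith⟩
    · simp only [if_neg hj0]
      have hj1 : 1 ≤ (j:ℝ) := by exact_mod_cast Nat.one_le_iff_ne_zero.2 hj0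
      have hjk' : (j:ℝ) ≤ (k:ℝ) := by exact_mod_cast hjk
      have hAkD : σ*ℓ + ((k:ℝ)-σ)*γ = D := by linarith [hγmul]
      have hA1lb : 0 ≤ σ*ℓ + (1-σ)*γ := by
        rcases hσcases with h | h
        · rw [h] at hγdef ⊢
          have hγpos : 0 < γ := by
            rw [hγdef]
            exact div_pos (by nlinarith) (by nlinarith)
          nlinarith
        · rw [h]; nlinarith
      have hA1ub : σ*ℓ + (1-σ)*γ ≤ D + 2 := by
        rcases hσcases with h | h
        · rw [h]; nlinarith
        · rw [h]; nlinarith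
      have heq : σ*ℓ + ((j:ℝ)-σ)*γ = (σ*ℓ + (1-σ)*γ) + ((j:ℝ)-1)*γ := by ring
      have heqD : (σ*ℓ + (1-σ)*γ) + ((k:ℝ)-1)*γ = D := by linear_combination hAkD
      rcases le_or_gt 0 γ with hγ0 | hγ0
      · constructor
        · rw [heq]
          nlinarith [mul_nonneg (by linarith : (0:ℝ) ≤ (j:ℝ)-1) hγ0]
        · rw [heq]
          nlinarith [mul_nonneg (by linarith : (0:ℝ) ≤ (k:ℝ)-(j:ℝ)) hγ0, heqD]
      · constructor
        · rw [heq]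
          nlinarith [mul_nonneg (by linarith : (0:ℝ) ≤ (k:ℝ)-(j:ℝ)) (by linarith : (0:ℝ) ≤ -γ), heqD, hD0]
        · rw [heq]
          nlinarith [mul_nonneg (by linarith : (0:ℝ) ≤ (j:ℝ)-1) (by linarith : (0:ℝ) ≤ -γ)]
  · -- B bounds
    intro j
    by_cases hj0 : j = 0
    · subst hj0
      refine ⟨by simp, by simp⟩
    · simp only [if_neg hj0]
      split_ifs
      · exact ⟨hβ0, hβ2⟩
      · exact ⟨le_refl 0, by norm_num⟩

set_option maxHeartbeats 1000000

/-- For `d ≥ 2` there is `C₃ > 0` such that for all distinct `x, y > C₃`,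
integers `n ≥ x` and `k > 1`: for every pair of points `p₁, p₂` with
`|p₁ - p₂| < k·x` and norms at most `n - x - 1`, there is `ε₀ > 0` (depending
on `p₁, p₂, x, k`) such that for every `ε ∈ (0, ε₀)` for which `p₁, p₂` are
vertices of `G_{n,d}(x,ε)`, their images under every `(1,y)`-annulus embedding
are at distance at most `k·y`. -/
theorem far_pairs_expand_steps (d : ℕ) (hd : 2 ≤ d) :
    ∃ C₃ : ℝ, 0 < C₃ ∧ ∀ x y : ℝ, C₃ < x → C₃ < y → x ≠ y →
      ∀ n k : ℕ, x ≤ (n : ℝ) → 1 < k →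
        ∀ p₁ p₂ : EuclideanSpace ℝ (Fin d),
          dist p₁ p₂ < (k : ℝ) * x →
          ‖p₁‖ ≤ (n : ℝ) - x - 1 → ‖p₂‖ ≤ (n : ℝ) - x - 1 →
          ∃ ε₀ : ℝ, 0 < ε₀ ∧ ∀ ε : ℝ, 0 < ε → ε < ε₀ →
            ∀ v₁ v₂ : GndVert d n ε, v₁.1 = p₁ → v₂.1 = p₂ →
              ∀ f : GndVert d n ε → EuclideanSpace ℝ (Fin d),
                IsAnnulusEmbedding (Gnd d n x ε) 1 y f →
                dist (f v₁) (f v₂) ≤ (k : ℝ) * y := by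
  refine ⟨9, by norm_num, ?_⟩
  intro x y hx hy _hxy n k _hnx hk p₁ p₂ hDkx hp₁ hp₂
  have hk2 : 2 ≤ k := hk
  have hy0 : (0:ℝ) < y := by linarith
  have hkR0 : (0:ℝ) < (k:ℝ) := by exact_mod_cast Nat.pos_of_ne_zero (by omega)
  by_cases hpp : p₁ = p₂
  · refine ⟨1, one_pos, fun ε hε hεε v₁ v₂ hv₁ hv₂ f hf => ?_⟩
    have hv : v₁ = v₂ := Subtype.ext (hv₁.trans (hpp.trans hv₂.symm))
    rw [hv, dist_self]
    positivity
  have hD0 : 0 < dist p₁ p₂ := dist_pos.2 hpp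
  obtain ⟨ℓ, hℓ1, hℓx, A, B, hA0, hB0, hAk, hBk, hstep, hAbd, hBbd⟩ :=
    exists_path_reals k hk2 x (dist p₁ p₂) hx hD0 hDkx
  set D := dist p₁ p₂ with hDdef
  have hDnorm : ‖p₂ - p₁‖ = D := by rw [hDdef, dist_eq_norm']
  set u : EuclideanSpace ℝ (Fin d) := D⁻¹ • (p₂ - p₁) with hudef
  have hu : ‖u‖ = 1 := by
    rw [hudef, norm_smul, Real.norm_eq_abs, abs_of_pos (inv_pos.2 hD0), hDnorm]
    field_simp
  obtain ⟨e, he, hue⟩ := exists_orthonormal hd u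
  have hp2eq : p₁ + D • u = p₂ := by
    rw [hudef, smul_smul, mul_inv_cancel₀ hD0.ne', one_smul]; abel
  set Q : ℕ → EuclideanSpace ℝ (Fin d) := fun j => p₁ + A j • u + B j • e with hQdef
  have hQ0 : Q 0 = p₁ := by simp [hQdef, hA0, hB0]
  have hQk : Q k = p₂ := by
    simp only [hQdef, hAk, hBk, zero_smul, add_zero, hp2eq]
  have hQdist : ∀ j < k, dist (Q j) (Q (j+1)) = ℓ := by
    intro j hj
    have h1 : Q j - Q (j+1) = (A j - A (j+1)) • u + (B j - B (j+1)) • e := by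
      simp only [hQdef]; module
    rw [dist_eq_norm, h1, norm_smul_add_smul hu he hue]
    have h2 : (A j - A (j+1))^2 + (B j - B (j+1))^2 = ℓ^2 := by
      have := hstep j hj; nlinarith [this]
    rw [h2, Real.sqrt_sq (by linarith)]
  have hQnorm : ∀ j ≤ k, ‖Q j‖ ≤ ((n:ℝ) - x - 1) + 4 := by
    intro j hjk
    obtain ⟨hA0j, hAD2⟩ := hAbd j hjk
    obtain ⟨hB0j, hB2⟩ := hBbd j
    have hBe : ‖B j • e‖ ≤ 2 := by
      rw [norm_smul, Real.norm_eq_abs, he, mul_one, abs_of_nonneg hB0j]; exact hB2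
    have hmain : ‖p₁ + A j • u‖ ≤ (n:ℝ) - x - 1 + 2 := by
      rcases le_or_gt (A j) D with hle | hgt
      · have hAD : A j / D ≤ 1 := by rw [div_le_one hD0]; exact hle
        have hAD0 : 0 ≤ A j / D := div_nonneg hA0j hD0.le
        have hsplit : p₁ + A j • u = (1 - A j / D) • p₁ + (A j / D) • (p₁ + D • u) := by
          match_scalars <;> (field_simp; try ring)
        rw [hsplit, hp2eq]
        calc ‖(1 - A j / D) • p₁ + (A j / D) • p₂‖
            ≤ ‖(1 - A j / D) • p₁‖ + ‖(A j / D) • p₂‖ := norm_add_le _ _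
          _ = (1 - A j / D) * ‖p₁‖ + (A j / D) * ‖p₂‖ := by
              rw [norm_smul, norm_smul, Real.norm_eq_abs, Real.norm_eq_abs,
                abs_of_nonneg (by linarith), abs_of_nonneg hAD0]
          _ ≤ (1 - A j / D) * ((n:ℝ) - x - 1) + (A j / D) * ((n:ℝ) - x - 1) := by
              have h1 : 0 ≤ ‖p₁‖ := norm_nonneg _
              have h2 : 0 ≤ ‖p₂‖ := norm_nonneg _
              have e1 := mul_le_mul_of_nonneg_left hp₁ (by linarith : (0:ℝ) ≤ 1 - A j / D)
              have e2 := mul_le_mul_of_nonneg_left hp₂ hAD0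
              linarith
          _ = (n:ℝ) - x - 1 := by ring
          _ ≤ _ := by linarith
      · have hsplit : p₁ + A j • u = p₂ + (A j - D) • u := by rw [← hp2eq]; module
        rw [hsplit]
        calc ‖p₂ + (A j - D) • u‖ ≤ ‖p₂‖ + ‖(A j - D) • u‖ := norm_add_le _ _
          _ ≤ ((n:ℝ) - x - 1) + 2 := by
              rw [norm_smul, Real.norm_eq_abs, hu, mul_one, abs_of_nonneg (by linarith)]
              have : A j - D ≤ 2 := by linarith
              linarith [hp₂]
    calc ‖Q j‖ = ‖(p₁ + A j • u) + B j • e‖ := by rw [hQdef]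
      _ ≤ ‖p₁ + A j • u‖ + ‖B j • e‖ := norm_add_le _ _
      _ ≤ _ := by linarith
  have hd0 : (0:ℝ) < d := by
    have : 0 < d := lt_of_lt_of_le two_pos hd
    exact_mod_cast this
  set m := min (ℓ - 1) (x - ℓ) with hmdef
  have hm0 : 0 < m := lt_min (by linarith) (by linarith)
  have hmℓ : m ≤ ℓ - 1 := min_le_left _ _
  have hmx : m ≤ x - ℓ := min_le_right _ _
  refine ⟨min (m / (4 * d)) (1 / d), lt_min (by positivity) (by positivity), ?_⟩
  intro ε hε hεlt v₁ v₂ hv₁ hv₂ f hf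
  have hεd1 : ε * d ≤ 1 := by
    have h := lt_of_lt_of_le hεlt (min_le_right _ _)
    rw [lt_div_iff₀ hd0] at h
    linarith
  have hεd0 : 0 ≤ ε * d := by positivity
  have hεdm : 2 * (ε * d) ≤ m := by
    have h := lt_of_lt_of_le hεlt (min_le_left _ _)
    rw [lt_div_iff₀ (by positivity : (0:ℝ) < 4 * d)] at h
    nlinarith
  set R : ℕ → EuclideanSpace ℝ (Fin d) :=
    fun j => if j = 0 then p₁ else if k ≤ j then p₂ else latRound ε (Q j) with hRdef
  have hk0 : k ≠ 0 := by omega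
  have hR0 : R 0 = p₁ := by simp [hRdef]
  have hRk : R k = p₂ := by simp [hRdef, hk0]
  have hRlat : ∀ j, InLattice ε (R j) := by
    intro j
    rw [hRdef]
    dsimp only
    split_ifs
    · exact hv₁ ▸ v₁.2.1
    · exact hv₂ ▸ v₂.2.1
    · exact latRound_inLattice ε _
  have hRQ : ∀ j ≤ k, dist (R j) (Q j) ≤ ε * d := by
    intro j hjk
    rw [hRdef]
    dsimp only
    split_ifs with h1 h2
    · subst h1; rw [hQ0, dist_self]; exact hεd0
    · have : j = k := le_antisymm hjk h2
      subst this; rw [hQk, dist_self]; exact hεd0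
    · rw [dist_comm]; exact latRound_dist ε hε _
  have hRnorm : ∀ j, ‖R j‖ ≤ (n:ℝ) := by
    intro j
    rw [hRdef]
    dsimp only
    split_ifs with h1 h2
    · exact hv₁ ▸ v₁.2.2
    · exact hv₂ ▸ v₂.2.2
    · have hjk : j ≤ k := by omega
      calc ‖latRound ε (Q j)‖ = dist (latRound ε (Q j)) 0 := (dist_zero_right _).symm
        _ ≤ dist (latRound ε (Q j)) (Q j) + dist (Q j) 0 := dist_triangle _ _ _
        _ = dist (Q j) (latRound ε (Q j)) + ‖Q j‖ := by rw [dist_comm, dist_zero_right]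
        _ ≤ ε * d + ((n:ℝ) - x - 1 + 4) := add_le_add (latRound_dist ε hε _) (hQnorm j hjk)
        _ ≤ n := by linarith
  set w : ℕ → GndVert d n ε := fun j => ⟨R j, hRlat j, hRnorm j⟩ with hwdef
  have hw0 : w 0 = v₁ := Subtype.ext (by rw [hwdef]; exact hR0.trans hv₁.symm)
  have hwk : w k = v₂ := Subtype.ext (by rw [hwdef]; exact hRk.trans hv₂.symm)
  have hadj : ∀ j < k, dist (f (w j)) (f (w (j+1))) ≤ y := by
    intro j hj
    have t1 := hRQ j (le_of_lt hj)
    have t2 := hRQ (j+1) (Nat.succ_le_of_lt hj)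
    have t3 := hQdist j hj
    have t1' : dist (Q j) (R j) ≤ ε * d := by rw [dist_comm]; exact t1
    have t2' : dist (Q (j+1)) (R (j+1)) ≤ ε * d := by rw [dist_comm]; exact t2
    have hd1 : dist (R j) (R (j+1)) ∈ Set.Icc 1 x := by
      constructor
      · have htri : dist (Q j) (Q (j+1)) ≤
            dist (Q j) (R j) + dist (R j) (R (j+1)) + dist (R (j+1)) (Q (j+1)) :=
          dist_triangle4 _ _ _ _
        rw [t3] at htri
        linarith
      · have htri : dist (R j) (R (j+1)) ≤
            dist (R j) (Q j) + dist (Q j) (Q (j+1)) + dist (Q (j+1)) (R (j+1)) :=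
          dist_triangle4 _ _ _ _
        rw [t3] at htri
        linarith
    have hne : w j ≠ w (j+1) := by
      intro hcontra
      have hRR : R j = R (j+1) := congrArg Subtype.val (hwdef ▸ hcontra)
      have : dist (R j) (R (j+1)) = 0 := by rw [hRR, dist_self]
      have := hd1.1
      linarith
    have hGadj : (Gnd d n x ε).Adj (w j) (w (j+1)) :=
      (⟨hne, hd1⟩ : w j ≠ w (j+1) ∧ dist (w j).1 (w (j+1)).1 ∈ Set.Icc 1 x)
    exact ((hf.2 _ _ hne).mp hGadj).2
  calc dist (f v₁) (f v₂) = dist (f (w 0)) (f (w k)) := by rw [hw0, hwk]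
    _ ≤ ∑ j ∈ Finset.range k, dist (f (w j)) (f (w (j+1))) :=
        dist_le_range_sum_dist (fun j => f (w j)) k
    _ ≤ ∑ _j ∈ Finset.range k, y :=
        Finset.sum_le_sum fun j hj => hadj j (Finset.mem_range.1 hj)
    _ = k * y := by simp [mul_comm]
end

section
/- Fix an integer d ≥ 2, reals C₁ > 0 and x > 2C₁ + 1, a real γ ∈ ((C₁+1)/x, 1), an integer n ≥ x, a point p ∈ ℝ^d with |p| ≤ n − x, and a point q with |p − q| = γx. For every c₁ ∈ (0,1] there exists c₂ = c₂(d, γ, c₁) > 0 such that for every sufficiently small ε > 0 the following holds: letting S be the set of points of the lattice εℤ^d lying in B(p, γx) ∩ B(q, C₁), every subset of S of cardinality at least c₁·|S| contains ⌊c₂·C₁^d⌋ points whose pairwise Euclidean distances all lie in [1, x] (i.e. which form a clique in G_{n,d}(x,ε)). -/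
/-- The set of points of the lattice `εℤ^d` lying in `B(p, r₁) ∩ B(q, r₂)`. -/
def latticePtsIn {d : ℕ} (ε : ℝ) (p q : EuclideanSpace ℝ (Fin d)) (r₁ r₂ : ℝ) :
    Set (EuclideanSpace ℝ (Fin d)) :=
  {r | InLattice ε r ∧ r ∈ Metric.closedBall p r₁ ∩ Metric.closedBall q r₂}

open Finset Metric

lemma aux_mem_Icc {ε a b : ℝ} (hε : 0 < ε) (z : ℤ) :
    z ∈ Finset.Icc ⌈a/ε⌉ ⌊b/ε⌋ ↔ a ≤ ε*z ∧ ε*z ≤ b := by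
  rw [Finset.mem_Icc, Int.ceil_le, Int.le_floor, div_le_iff₀ hε, le_div_iff₀ hε]
  constructor <;> rintro ⟨h1, h2⟩ <;> constructor <;> linarith

lemma aux_card_le {ε a b : ℝ} (hε : 0 < ε) (hab : a ≤ b) :
    ((Finset.Icc ⌈a/ε⌉ ⌊b/ε⌋).card : ℝ) ≤ (b-a)/ε + 1 := by
  rw [Int.card_Icc]
  have h1 : (⌊b/ε⌋ : ℝ) ≤ b/ε := Int.floor_le _
  have h2 : a/ε ≤ (⌈a/ε⌉ : ℝ) := Int.le_ceil _
  rcases le_or_gt (⌊b/ε⌋ + 1 - ⌈a/ε⌉) 0 with h | h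
  · rw [Int.toNat_of_nonpos h]
    have : 0 ≤ (b-a)/ε := div_nonneg (by linarith) hε.le
    push_cast; linarith
  · have hcast : ((⌊b/ε⌋ + 1 - ⌈a/ε⌉).toNat : ℝ) = ((⌊b/ε⌋ : ℝ) + 1 - (⌈a/ε⌉ : ℝ)) := by
      have := Int.toNat_of_nonneg h.le
      exact_mod_cast congrArg (fun z : ℤ => (z : ℝ)) this
    rw [hcast, sub_div]
    linarith

lemma aux_card_ge {ε a b : ℝ} (hε : 0 < ε) :
    (b-a)/ε - 1 ≤ ((Finset.Icc ⌈a/ε⌉ ⌊b/ε⌋).card : ℝ) := by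
  rw [Int.card_Icc]
  have h1 : b/ε - 1 ≤ (⌊b/ε⌋ : ℝ) := by
    have := Int.sub_one_lt_floor (b/ε); linarith
  have h2 : (⌈a/ε⌉ : ℝ) < a/ε + 1 := Int.ceil_lt_add_one _
  have h3 : ((⌊b/ε⌋ + 1 - ⌈a/ε⌉ : ℤ) : ℝ) ≤ ((⌊b/ε⌋ + 1 - ⌈a/ε⌉).toNat : ℝ) := by
    exact_mod_cast Int.self_le_toNat _
  push_cast at h3
  rw [sub_div]
  linarith


variable {d : ℕ} {ε w : ℝ}

def latBoxSet (ε : ℝ) (c : EuclideanSpace ℝ (Fin d)) (w : ℝ) :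
    Set (EuclideanSpace ℝ (Fin d)) :=
  (fun z : Fin d → ℤ => (WithLp.toLp 2 (fun i => ε * z i) : EuclideanSpace ℝ (Fin d))) ''
    ↑(Fintype.piFinset fun i => Finset.Icc ⌈(c i - w)/ε⌉ ⌊(c i + w)/ε⌋)

lemma phi_inj (hε : ε ≠ 0) :
    Function.Injective (fun z : Fin d → ℤ => (WithLp.toLp 2 (fun i => ε * z i) : EuclideanSpace ℝ (Fin d))) := by
  intro z z' h
  funext i
  have h2 : (ε : ℝ) * z i = ε * z' i := congrFun (congrArg WithLp.ofLp h) i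
  exact_mod_cast mul_left_cancel₀ hε h2

lemma latBoxSet_finite (ε : ℝ) (c : EuclideanSpace ℝ (Fin d)) (w : ℝ) :
    (latBoxSet ε c w).Finite :=
  ((Fintype.piFinset fun i => Finset.Icc ⌈(c i - w)/ε⌉ ⌊(c i + w)/ε⌋).finite_toSet).image _

lemma ncard_latBoxSet (hε : ε ≠ 0) (c : EuclideanSpace ℝ (Fin d)) (w : ℝ) :
    (latBoxSet ε c w).ncard = ∏ i, (Finset.Icc ⌈(c i - w)/ε⌉ ⌊(c i + w)/ε⌋).card := by
  rw [latBoxSet, Set.ncard_image_of_injective _ (phi_inj hε), Set.ncard_coe_finset,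
    Fintype.card_piFinset]

lemma coord_le (x y : EuclideanSpace ℝ (Fin d)) (i : Fin d) : dist (x i) (y i) ≤ dist x y := by
  rw [EuclideanSpace.dist_eq]
  rw [show dist (x i) (y i) = Real.sqrt (dist (x i) (y i)^2) from (Real.sqrt_sq dist_nonneg).symm]
  apply Real.sqrt_le_sqrt
  exact Finset.single_le_sum (f := fun j => dist (x j) (y j)^2)
    (fun j _ => sq_nonneg _) (Finset.mem_univ i)

lemma ncard_latBoxSet_le (hε : 0 < ε) (hw : 0 ≤ w) (c : EuclideanSpace ℝ (Fin d)) :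
    ((latBoxSet ε c w).ncard : ℝ) ≤ ((2*w)/ε + 1)^d := by
  rw [ncard_latBoxSet hε.ne' c w]
  push_cast
  calc (∏ i, ((Finset.Icc ⌈(c i - w)/ε⌉ ⌊(c i + w)/ε⌋).card : ℝ))
      ≤ ∏ _i : Fin d, ((2*w)/ε + 1) := by
        apply Finset.prod_le_prod (fun i _ => Nat.cast_nonneg _)
        intro i _
        have h := aux_card_le (a := c i - w) (b := c i + w) hε (by linarith)
        have h2 : (c i + w - (c i - w))/ε = (2*w)/ε := by ring_nf
        rw [h2] at h
        exact h
    _ = ((2*w)/ε + 1)^d := by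
        rw [Finset.prod_const, Finset.card_univ, Fintype.card_fin]

lemma ncard_latBoxSet_ge (hε : 0 < ε) (hεw : ε ≤ w) (c : EuclideanSpace ℝ (Fin d)) :
    (w/ε)^d ≤ ((latBoxSet ε c w).ncard : ℝ) := by
  rw [ncard_latBoxSet hε.ne' c w]
  push_cast
  calc (w/ε)^d = ∏ _i : Fin d, (w/ε) := by
        rw [Finset.prod_const, Finset.card_univ, Fintype.card_fin]
    _ ≤ ∏ i, ((Finset.Icc ⌈(c i - w)/ε⌉ ⌊(c i + w)/ε⌋).card : ℝ) := by
        apply Finset.prod_le_prod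
          (fun i _ => le_of_lt (div_pos (lt_of_lt_of_le hε hεw) hε))
        intro i _
        have h := aux_card_ge (a := c i - w) (b := c i + w) hε
        have h2 : (c i + w - (c i - w))/ε = 2*w/ε := by ring_nf
        rw [h2] at h
        have h3 : 1 ≤ w/ε := (one_le_div hε).2 hεw
        have h4 : 2*w/ε = w/ε + w/ε := by ring
        linarith

lemma latBoxSet_subset (hε : 0 < ε) (hw : 0 ≤ w) (c : EuclideanSpace ℝ (Fin d)) :
    latBoxSet ε c w ⊆
      {p : EuclideanSpace ℝ (Fin d) | InLattice ε p ∧ p ∈ Metric.closedBall c (Real.sqrt d * w)} := by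
  rintro p ⟨z, hz, rfl⟩
  rw [Finset.mem_coe, Fintype.mem_piFinset] at hz
  refine ⟨fun i => ⟨z i, rfl⟩, ?_⟩
  rw [Metric.mem_closedBall, EuclideanSpace.dist_eq]
  have hb : ∀ i, dist ((fun i => ε * (z i : ℝ)) i) (c i) ≤ w := by
    intro i
    have h := (aux_mem_Icc hε (z i)).1 (hz i)
    have h2 : dist (ε * (z i : ℝ)) (c i) ≤ w := by
      rw [Real.dist_eq, abs_le]
      exact ⟨by linarith [h.1], by linarith [h.2]⟩
    exact h2
  calc Real.sqrt (∑ i, dist _ (c i) ^ 2) ≤ Real.sqrt (∑ _i : Fin d, w^2) := by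
        apply Real.sqrt_le_sqrt
        exact Finset.sum_le_sum fun i _ => pow_le_pow_left₀ dist_nonneg (hb i) 2
    _ = Real.sqrt d * w := by
        rw [Finset.sum_const, Finset.card_univ, Fintype.card_fin, nsmul_eq_mul,
          Real.sqrt_mul (by positivity), Real.sqrt_sq hw]

lemma subset_latBoxSet (hε : 0 < ε) (c : EuclideanSpace ℝ (Fin d)) (ρ : ℝ) :
    {p : EuclideanSpace ℝ (Fin d) | InLattice ε p ∧ p ∈ Metric.closedBall c ρ} ⊆
      latBoxSet ε c ρ := by
  rintro p ⟨hlat, hball⟩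
  choose z hz using hlat
  refine ⟨z, ?_, ?_⟩
  · rw [Finset.mem_coe, Fintype.mem_piFinset]
    intro i
    rw [aux_mem_Icc hε]
    have h := le_trans (coord_le p c i) (Metric.mem_closedBall.1 hball)
    rw [Real.dist_eq, abs_le] at h
    rw [← hz i]
    exact ⟨by linarith [h.1], by linarith [h.2]⟩
  · ext i
    exact (hz i).symm

lemma exists_sep (T : Finset (EuclideanSpace ℝ (Fin d))) :
    ∃ U, U ⊆ T ∧ (∀ a ∈ U, ∀ b ∈ U, a ≠ b → 1 ≤ dist a b) ∧
      ∀ t ∈ T, ∃ u ∈ U, dist t u < 1 := by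
  classical
  have hfin : (T.powerset.filter
      (fun U => ∀ a ∈ U, ∀ b ∈ U, a ≠ b → 1 ≤ dist a b)).Nonempty := ⟨∅, by simp⟩
  obtain ⟨U, hU, hmax⟩ := Finset.exists_max_image _ Finset.card hfin
  simp only [Finset.mem_filter, Finset.mem_powerset] at hU
  refine ⟨U, hU.1, hU.2, ?_⟩
  intro t ht
  by_contra hcon
  push_neg at hcon
  have htU : t ∉ U := fun h => by
    have h1 := hcon t h
    rw [dist_self] at h1
    linarith
  have hins : insert t U ∈ T.powerset.filter
      (fun U => ∀ a ∈ U, ∀ b ∈ U, a ≠ b → 1 ≤ dist a b) := by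
    simp only [Finset.mem_filter, Finset.mem_powerset]
    refine ⟨Finset.insert_subset ht hU.1, ?_⟩
    intro a ha b hb hab
    rcases Finset.mem_insert.1 ha with rfl | ha' <;> rcases Finset.mem_insert.1 hb with rfl | hb'
    · exact absurd rfl hab
    · exact hcon b hb'
    · rw [dist_comm]; exact hcon a ha'
    · exact hU.2 a ha' b hb' hab
  have hle := hmax _ hins
  rw [Finset.card_insert_of_notMem htU] at hle
  omega


/-- Fix `d ≥ 2`, `γ ∈ (0,1)` and `c₁ ∈ (0,1]`. There is `c₂ = c₂(d,γ,c₁) > 0`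
such that for all `C₁ > 0`, `x > 2C₁ + 1` with `γ > (C₁+1)/x`, all integers
`n ≥ x`, all `p` with `|p| ≤ n - x`, all `q` with `|p - q| = γx`, and all
sufficiently small `ε > 0`: every subset of cardinality at least `c₁|S|` of the
set `S` of lattice points of `B(p,γx) ∩ B(q,C₁)` contains `⌊c₂·C₁^d⌋` points
with pairwise distances in `[1,x]` (a clique of `G_{n,d}(x,ε)`). -/
theorem dense_subset_contains_clique (d : ℕ) (hd : 2 ≤ d)
    (γ : ℝ) (hγ0 : 0 < γ) (hγ1 : γ < 1) (c₁ : ℝ) (hc₁0 : 0 < c₁) (hc₁1 : c₁ ≤ 1) :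
    ∃ c₂ : ℝ, 0 < c₂ ∧
      ∀ C₁ x : ℝ, 0 < C₁ → 2 * C₁ + 1 < x → (C₁ + 1) / x < γ →
        ∀ n : ℕ, x ≤ (n : ℝ) →
          ∀ p q : EuclideanSpace ℝ (Fin d), ‖p‖ ≤ (n : ℝ) - x → dist p q = γ * x →
            ∃ ε₀ : ℝ, 0 < ε₀ ∧ ∀ ε : ℝ, 0 < ε → ε < ε₀ →
              ∀ T : Set (EuclideanSpace ℝ (Fin d)),
                T ⊆ latticePtsIn ε p q (γ * x) C₁ →
                c₁ * ((latticePtsIn ε p q (γ * x) C₁).ncard : ℝ) ≤ (T.ncard : ℝ) →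
                ∃ U : Finset (EuclideanSpace ℝ (Fin d)),
                  (↑U : Set (EuclideanSpace ℝ (Fin d))) ⊆ T ∧
                  U.card = ⌊c₂ * C₁ ^ d⌋₊ ∧
                  ∀ a ∈ U, ∀ b ∈ U, a ≠ b → dist a b ∈ Set.Icc 1 x := by
  classical
  have hd0 : (0:ℝ) < (d:ℝ) := by exact_mod_cast lt_of_lt_of_le (by norm_num) hd
  have hsd : 0 < Real.sqrt d := Real.sqrt_pos.2 hd0
  refine ⟨c₁ / (6 * Real.sqrt d)^d, by positivity, ?_⟩
  intro C₁ x hC₁ hx hγx n hn p q hp hpq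
  have hx0 : (0:ℝ) < x := by linarith
  have hγx' : C₁ + 1 < γ * x := by
    rw [div_lt_iff₀ hx0] at hγx; linarith
  set w := C₁ / (2 * Real.sqrt d) with hwdef
  have hw0 : 0 < w := by positivity
  refine ⟨min w 1, by positivity, ?_⟩
  intro ε hε hεlt T hTsub hTcard
  have hεw : ε ≤ w := le_of_lt (lt_of_lt_of_le hεlt (min_le_left _ _))
  have hε1 : ε ≤ 1 := le_of_lt (lt_of_lt_of_le hεlt (min_le_right _ _))
  set S := latticePtsIn ε p q (γ * x) C₁ with hSdef
  have hSsub : S ⊆ latBoxSet ε q C₁ := fun r hr =>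
    subset_latBoxSet hε q C₁ ⟨hr.1, hr.2.2⟩
  have hSfin : S.Finite := (latBoxSet_finite ε q C₁).subset hSsub
  have hTfin : T.Finite := hSfin.subset hTsub
  -- the small ball inside the lens
  have hγx0 : (0:ℝ) < γ * x := by positivity
  set t := C₁ / (2 * (γ * x)) with htdef
  have ht0 : 0 < t := by positivity
  have ht1 : t < 1 := by
    rw [htdef, div_lt_one (by positivity)]; linarith
  have htγ : t * (γ * x) = C₁ / 2 := by
    rw [htdef]; field_simp
  set q' : EuclideanSpace ℝ (Fin d) := q + t • (p - q) with hq'def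
  have hnormpq : ‖p - q‖ = γ * x := by rw [← dist_eq_norm, hpq]
  have hq'q : dist q' q = C₁ / 2 := by
    rw [dist_eq_norm, hq'def]
    have h1 : q + t • (p - q) - q = t • (p - q) := by abel
    rw [h1, norm_smul, Real.norm_eq_abs, abs_of_pos ht0, hnormpq, htγ]
  have hq'p : dist q' p = γ * x - C₁ / 2 := by
    rw [dist_eq_norm, hq'def]
    have h1 : q + t • (p - q) - p = (t - 1) • (p - q) := by
      rw [sub_smul, one_smul]; abel
    rw [h1, norm_smul, Real.norm_eq_abs, abs_of_neg (by linarith), hnormpq]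
    have : -(t - 1) * (γ * x) = γ * x - t * (γ * x) := by ring
    rw [this, htγ]
  have hball : {r : EuclideanSpace ℝ (Fin d) |
      InLattice ε r ∧ r ∈ Metric.closedBall q' (C₁/2)} ⊆ S := by
    rintro r ⟨hl, hb⟩
    rw [Metric.mem_closedBall] at hb
    refine ⟨hl, Metric.mem_closedBall.2 ?_, Metric.mem_closedBall.2 ?_⟩
    · calc dist r p ≤ dist r q' + dist q' p := dist_triangle _ _ _
        _ ≤ C₁/2 + (γ * x - C₁/2) := by linarith
        _ = γ * x := by ring
    · calc dist r q ≤ dist r q' + dist q' q := dist_triangle _ _ _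
        _ ≤ C₁/2 + C₁/2 := by linarith
        _ = C₁ := by ring
  have hsdw : Real.sqrt d * w = C₁ / 2 := by
    rw [hwdef]; field_simp
  have hSlow : (w/ε)^d ≤ (S.ncard : ℝ) := by
    have h1 : latBoxSet ε q' w ⊆ S := by
      refine le_trans (latBoxSet_subset hε hw0.le q') ?_
      rw [hsdw]; exact hball
    calc (w/ε)^d ≤ ((latBoxSet ε q' w).ncard : ℝ) := ncard_latBoxSet_ge hε hεw q'
      _ ≤ (S.ncard : ℝ) := Nat.cast_le.2 (Set.ncard_le_ncard h1 hSfin)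
  set T' := hTfin.toFinset with hT'def
  have hT'card : (T'.card : ℝ) = (T.ncard : ℝ) := by
    rw [Set.ncard_eq_toFinset_card T hTfin]
  obtain ⟨U, hUsub, hUsep, hUcov⟩ := exists_sep T'
  have hcount : (T'.card : ℝ) ≤ (U.card : ℝ) * (3/ε)^d := by
    have hsub : T' ⊆ U.biUnion (fun u => T'.filter (fun r => dist r u < 1)) := by
      intro r hr
      obtain ⟨u, hu, hdu⟩ := hUcov r hr
      exact Finset.mem_biUnion.2 ⟨u, hu, Finset.mem_filter.2 ⟨hr, hdu⟩⟩
    have h1 : T'.card ≤ ∑ u ∈ U, (T'.filter (fun r => dist r u < 1)).card :=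
      le_trans (Finset.card_le_card hsub) Finset.card_biUnion_le
    have h2 : ∀ u ∈ U, ((T'.filter (fun r => dist r u < 1)).card : ℝ) ≤ (3/ε)^d := by
      intro u _
      have hsub2 : ↑(T'.filter (fun r => dist r u < 1)) ⊆ latBoxSet ε u 1 := by
        intro r hr
        rw [Finset.mem_coe, Finset.mem_filter, Set.Finite.mem_toFinset] at hr
        exact subset_latBoxSet hε u 1 ⟨(hTsub hr.1).1, Metric.mem_closedBall.2 hr.2.le⟩
      have h3 := Set.ncard_le_ncard hsub2 (latBoxSet_finite ε u 1)
      rw [Set.ncard_coe_finset] at h3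
      have h4 : ((latBoxSet ε u 1).ncard : ℝ) ≤ ((2*1)/ε + 1)^d :=
        ncard_latBoxSet_le hε one_pos.le u
      have h5 : (2*1)/ε + 1 ≤ 3/ε := by
        have h6 : 1 ≤ 1/ε := (one_le_div hε).2 hε1
        have h7 : (3:ℝ)/ε = 2*1/ε + 1/ε := by ring
        rw [h7]
        linarith
      calc ((T'.filter (fun r => dist r u < 1)).card : ℝ)
          ≤ ((latBoxSet ε u 1).ncard : ℝ) := Nat.cast_le.2 h3
        _ ≤ ((2*1)/ε + 1)^d := h4
        _ ≤ (3/ε)^d := by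
            apply pow_le_pow_left₀ (by positivity) h5
    calc (T'.card : ℝ) ≤ ∑ u ∈ U, ((T'.filter (fun r => dist r u < 1)).card : ℝ) := by
          exact_mod_cast h1
      _ ≤ ∑ _u ∈ U, (3/ε)^d := Finset.sum_le_sum h2
      _ = (U.card : ℝ) * (3/ε)^d := by rw [Finset.sum_const, nsmul_eq_mul]
  have hchain : c₁ * (w/ε)^d ≤ (U.card : ℝ) * (3/ε)^d := by
    calc c₁ * (w/ε)^d ≤ c₁ * (S.ncard : ℝ) := by
          exact mul_le_mul_of_nonneg_left hSlow hc₁0.le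
      _ ≤ (T.ncard : ℝ) := hTcard
      _ = (T'.card : ℝ) := hT'card.symm
      _ ≤ (U.card : ℝ) * (3/ε)^d := hcount
  have hKpos : (0:ℝ) < (3/ε)^d := by positivity
  have hUlow : c₁ * (w/3)^d ≤ (U.card : ℝ) := by
    have key : (c₁ * (w/3)^d) * (3/ε)^d = c₁ * (w/ε)^d := by
      rw [mul_assoc, ← mul_pow]
      congr 2
      field_simp
    exact le_of_mul_le_mul_right (by rw [key]; exact hchain) hKpos
  have hc2 : c₁ / (6 * Real.sqrt d)^d * C₁^d = c₁ * (w/3)^d := by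
    have hw3 : w/3 = C₁/(6 * Real.sqrt d) := by
      rw [hwdef, div_div]
      congr 1
      ring
    rw [hw3, div_pow]
    ring
  have hfloor : ⌊c₁ / (6 * Real.sqrt d)^d * C₁^d⌋₊ ≤ U.card := by
    have h1 : c₁ / (6 * Real.sqrt d)^d * C₁^d ≤ (U.card : ℝ) := by rw [hc2]; exact hUlow
    calc ⌊c₁ / (6 * Real.sqrt d)^d * C₁^d⌋₊ ≤ ⌊(U.card : ℝ)⌋₊ := Nat.floor_le_floor h1
      _ = U.card := Nat.floor_natCast _
  obtain ⟨U', hU'sub, hU'card⟩ := Finset.exists_subset_card_eq hfloor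
  refine ⟨U', ?_, hU'card, ?_⟩
  · intro a ha
    exact (Set.Finite.mem_toFinset hTfin).1 (hUsub (hU'sub ha))
  · intro a ha b hb hab
    have haT : a ∈ T := (Set.Finite.mem_toFinset hTfin).1 (hUsub (hU'sub ha))
    have hbT : b ∈ T := (Set.Finite.mem_toFinset hTfin).1 (hUsub (hU'sub hb))
    have haq : dist a q ≤ C₁ := Metric.mem_closedBall.1 (hTsub haT).2.2
    have hbq : dist b q ≤ C₁ := Metric.mem_closedBall.1 (hTsub hbT).2.2
    refine Set.mem_Icc.2 ⟨hUsep a (hU'sub ha) b (hU'sub hb) hab, ?_⟩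
    calc dist a b ≤ dist a q + dist q b := dist_triangle _ _ _
      _ = dist a q + dist b q := by rw [dist_comm q b]
      _ ≤ C₁ + C₁ := by linarith
      _ ≤ x := by linarith
end

section
/- There exists a constant C₀ > 0 such that for all reals x, y ≥ C₀ with x ≠ y and every integer n ≥ x, there exists ε₀ > 0 so that for every ε ∈ (0, ε₀) the following holds in dimension d = 1: for every pair of vertices v₁, v₂ of G_{n,1}(x,ε) whose positions p₁, p₂ in the natural embedding satisfy |p₁ − p₂| ≤ 1 and max(|p₁|, |p₂|) ≤ n − x, and for every (1,y)-annulus embedding f of G_{n,1}(x,ε) into ℝ, one has |f(v₁) − f(v₂)| ≤ 1. -/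
/- ----------------------------------------------------------------
   Auxiliary lemmas
----------------------------------------------------------------- -/

private lemma dist1 (p q : EuclideanSpace ℝ (Fin 1)) : dist p q = |p 0 - q 0| := by
  rw [EuclideanSpace.dist_eq]
  simp [Fin.sum_univ_one, Real.dist_eq, Real.sqrt_sq_eq_abs, sq_abs]

private lemma norm1 (p : EuclideanSpace ℝ (Fin 1)) : ‖p‖ = |p 0| := by
  rw [EuclideanSpace.norm_eq]
  simp [Fin.sum_univ_one, Real.sqrt_sq_eq_abs]

private lemma sum_range_shift (g : ℕ → ℝ) (a b : ℕ) :
    (∑ k ∈ Finset.range (a+b), g k)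
      = (∑ k ∈ Finset.range a, g k) + ∑ k ∈ Finset.range b, g (a+k) := by
  induction b with
  | zero => simp
  | succ b ih => rw [← Nat.add_assoc, Finset.sum_range_succ, Finset.sum_range_succ, ih]; ring

private lemma rearrange (G : ℕ → ℝ) (a b : ℕ) :
    ∑ k ∈ Finset.range b, (G (a+k) - G k) = ∑ k ∈ Finset.range a, (G (b+k) - G k) := by
  have h1 := sum_range_shift G a b
  have h2 := sum_range_shift G b a
  rw [Nat.add_comm b a] at h2
  simp only [Finset.sum_sub_distrib]
  linarith [h1, h2]

/-- Three reals pairwise at distance `≥ 1` cannot all lie within distance `< 1`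
of a common point. -/
private lemma three_sep {L a b c : ℝ} (ha : |a - L| < 1) (hb : |b - L| < 1)
    (hc : |c - L| < 1) (hab : 1 ≤ |a - b|) (hac : 1 ≤ |a - c|)
    (hbc : 1 ≤ |b - c|) : False := by
  rw [abs_sub_lt_iff] at ha hb hc
  rcases le_abs.mp hab with h1 | h1 <;> rcases le_abs.mp hac with h2 | h2 <;>
    rcases le_abs.mp hbc with h3 | h3 <;>
    linarith [ha.1, ha.2, hb.1, hb.2, hc.1, hc.2]

private lemma ceil_spec {ε : ℝ} (hε : 0 < ε) (a : ℝ) :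
    a ≤ ε * (⌈a/ε⌉ : ℝ) ∧ ε * (⌈a/ε⌉ : ℝ) < a + ε := by
  constructor
  · have h := Int.le_ceil (a/ε)
    calc a = ε * (a/ε) := by field_simp
    _ ≤ ε * (⌈a/ε⌉ : ℝ) := by nlinarith
  · have h := Int.ceil_lt_add_one (a/ε)
    have : ε * (⌈a/ε⌉ : ℝ) < ε * (a/ε + 1) := by nlinarith
    calc ε * (⌈a/ε⌉ : ℝ) < ε * (a/ε + 1) := this
    _ = a + ε := by field_simp

section Core

variable {x y ε : ℝ} {F : ℤ → ℝ}

/-- The two transfer hypotheses from the annulus embedding, in ordered form. -/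
def HAdj (x y ε : ℝ) (F : ℤ → ℝ) : Prop :=
  ∀ z w : ℤ, |ε*(z:ℝ)| ≤ x → |ε*(w:ℝ)| ≤ x → 1 ≤ ε*(w:ℝ) - ε*(z:ℝ) →
    ε*(w:ℝ) - ε*(z:ℝ) ≤ x → 1 ≤ |F w - F z| ∧ |F w - F z| ≤ y

def HNon (x y ε : ℝ) (F : ℤ → ℝ) : Prop :=
  ∀ z w : ℤ, |ε*(z:ℝ)| ≤ x → |ε*(w:ℝ)| ≤ x → 0 < ε*(w:ℝ) - ε*(z:ℝ) →
    (ε*(w:ℝ) - ε*(z:ℝ) < 1 ∨ x < ε*(w:ℝ) - ε*(z:ℝ)) →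
    |F w - F z| < 1 ∨ y < |F w - F z|

set_option maxHeartbeats 1000000 in
/-- The fine-pair gadget, asymmetric version (needs `-1 ≤ ε z`). -/
private lemma gadgetA (hx : 30 ≤ x) (hy : 30 ≤ y) (hε : 0 < ε) (hε1 : ε ≤ 1/100)
    (Hadj : HAdj x y ε F) (Hnon : HNon x y ε F) (z w : ℤ)
    (hzb : |ε*(z:ℝ)| ≤ x/2 + 2) (hwb : |ε*(w:ℝ)| ≤ x/2 + 2)
    (hlt : 0 < ε*(w:ℝ) - ε*(z:ℝ)) (hd : ε*(w:ℝ) - ε*(z:ℝ) < 1)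
    (hleft : -1 ≤ ε*(z:ℝ)) :
    |F w - F z| < 1 := by
  by_contra hcon
  push_neg at hcon
  rw [abs_le] at hzb hwb
  have hzx : |ε*(z:ℝ)| ≤ x := abs_le.mpr ⟨by linarith [hzb.1], by linarith [hzb.2]⟩
  have hwx : |ε*(w:ℝ)| ≤ x := abs_le.mpr ⟨by linarith [hwb.1], by linarith [hwb.2]⟩
  have hfar : y < |F w - F z| := by
    rcases Hnon z w hzx hwx hlt (Or.inl hd) with h | h
    · exact absurd h (not_lt.mpr hcon)
    · exact h
  -- auxiliary lattice points
  set S : ℤ := ⌈(x - 5/2)/ε⌉ with hSdef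
  set T1 : ℤ := ⌈(13/5)/ε⌉ with hT1def
  set T2 : ℤ := ⌈(41/10)/ε⌉ with hT2def
  set T3 : ℤ := ⌈(28/5)/ε⌉ with hT3def
  have hS := ceil_spec hε (x - 5/2)
  have hT1 := ceil_spec hε (13/5)
  have hT2 := ceil_spec hε (41/10)
  have hT3 := ceil_spec hε (28/5)
  rw [← hSdef] at hS; rw [← hT1def] at hT1; rw [← hT2def] at hT2; rw [← hT3def] at hT3
  -- coercion identities
  have eS : ε*(z:ℝ) - ε*(((z - S : ℤ)):ℝ) = ε*(S:ℝ) := by push_cast; ring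
  have eSw : ε*(w:ℝ) - ε*(((z - S : ℤ)):ℝ) = (ε*(w:ℝ) - ε*(z:ℝ)) + ε*(S:ℝ) := by
    push_cast; ring
  have eT : ∀ T : ℤ, ε*(((z + T : ℤ)):ℝ) - ε*(z:ℝ) = ε*(T:ℝ) := by
    intro T; push_cast; ring
  have eTw : ∀ T : ℤ, ε*(((z + T : ℤ)):ℝ) - ε*(w:ℝ)
      = ε*(T:ℝ) - (ε*(w:ℝ) - ε*(z:ℝ)) := by intro T; push_cast; ring
  have eTT : ∀ T T' : ℤ, ε*(((z + T' : ℤ)):ℝ) - ε*(((z + T : ℤ)):ℝ)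
      = ε*(T':ℝ) - ε*(T:ℝ) := by intro T T'; push_cast; ring
  have eST : ∀ T : ℤ, ε*(((z + T : ℤ)):ℝ) - ε*(((z - S : ℤ)):ℝ)
      = ε*(T:ℝ) + ε*(S:ℝ) := by intro T; push_cast; ring
  -- position bounds for auxiliary points
  have hlb : |ε*(((z - S : ℤ)):ℝ)| ≤ x := by
    rw [abs_le]
    constructor
    · have : ε*(((z - S : ℤ)):ℝ) = ε*(z:ℝ) - ε*(S:ℝ) := by push_cast; ring
      rw [this]; linarith [hS.2]
    · have : ε*(((z - S : ℤ)):ℝ) = ε*(z:ℝ) - ε*(S:ℝ) := by push_cast; ring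
      rw [this]; linarith [hS.1, hzb.2]
  have hrb : ∀ T : ℤ, 13/5 ≤ ε*(T:ℝ) → ε*(T:ℝ) < 28/5 + ε → |ε*(((z + T : ℤ)):ℝ)| ≤ x := by
    intro T h1 h2
    rw [abs_le]
    have heq : ε*(((z + T : ℤ)):ℝ) = ε*(z:ℝ) + ε*(T:ℝ) := by push_cast; ring
    rw [heq]
    constructor
    · linarith
    · linarith [hzb.2]
  have hrb1 := hrb T1 hT1.1 (by linarith [hT1.2])
  have hrb2 := hrb T2 (by linarith [hT2.1]) (by linarith [hT2.2])
  have hrb3 := hrb T3 (by linarith [hT3.1]) (by linarith [hT3.2])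
  -- common-neighbour facts: each auxiliary point is adjacent to both z and w
  have hcl1 : 1 ≤ |F z - F (z - S)| ∧ |F z - F (z - S)| ≤ y := by
    apply Hadj (z - S) z hlb hzx
    · rw [eS]; linarith [hS.1]
    · rw [eS]; linarith [hS.2]
  have hcl2 : 1 ≤ |F w - F (z - S)| ∧ |F w - F (z - S)| ≤ y := by
    apply Hadj (z - S) w hlb hwx
    · rw [eSw]; linarith [hS.1]
    · rw [eSw]; linarith [hS.2]
  have hcr : ∀ T : ℤ, |ε*(((z + T : ℤ)):ℝ)| ≤ x → 13/5 ≤ ε*(T:ℝ) → ε*(T:ℝ) < 28/5 + ε →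
      (1 ≤ |F (z + T) - F z| ∧ |F (z + T) - F z| ≤ y)
      ∧ (1 ≤ |F (z + T) - F w| ∧ |F (z + T) - F w| ≤ y) := by
    intro T hb h1 h2
    constructor
    · apply Hadj z (z + T) hzx hb
      · rw [eT]; linarith
      · rw [eT]; linarith
    · apply Hadj w (z + T) hwx hb
      · rw [eTw]; linarith
      · rw [eTw]; linarith
  have hcr1 := hcr T1 hrb1 hT1.1 (by linarith [hT1.2])
  have hcr2 := hcr T2 hrb2 (by linarith [hT2.1]) (by linarith [hT2.2])
  have hcr3 := hcr T3 hrb3 (by linarith [hT3.1]) (by linarith [hT3.2])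
  -- any two common neighbours have images < y apart
  have key : ∀ m1 m2 : ℝ, |m1 - F z| ≤ y → |m1 - F w| ≤ y →
      |m2 - F z| ≤ y → |m2 - F w| ≤ y → |m1 - m2| < y := by
    intro m1 m2 h1 h2 h3 h4
    rw [abs_le] at h1 h2 h3 h4
    rw [abs_lt]
    rcases lt_abs.mp hfar with h | h
    · constructor <;> linarith
    · constructor <;> linarith
  -- l is non-adjacent to each r, so their images are < 1 apart
  have hlr : ∀ T : ℤ, |ε*(((z + T : ℤ)):ℝ)| ≤ x → 13/5 ≤ ε*(T:ℝ) →
      |F (z + T) - F z| ≤ y → |F (z + T) - F w| ≤ y →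
      |F (z + T) - F (z - S)| < 1 := by
    intro T hb h1 hy1 hy2
    have hpos : 0 < ε*(((z + T : ℤ)):ℝ) - ε*(((z - S : ℤ)):ℝ) := by
      rw [eST]; linarith [hS.1]
    have hx2 : x < ε*(((z + T : ℤ)):ℝ) - ε*(((z - S : ℤ)):ℝ) := by
      rw [eST]; linarith [hS.1]
    rcases Hnon (z - S) (z + T) hlb hb hpos (Or.inr hx2) with h | h
    · exact h
    · exfalso
      have hcl1' : |F (z - S) - F z| ≤ y := by
        have := hcl1.2; rwa [abs_sub_comm] at this
      have hcl2' : |F (z - S) - F w| ≤ y := by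
        have := hcl2.2; rwa [abs_sub_comm] at this
      have h1' := key (F (z + T)) (F (z - S)) hy1 hy2 hcl1' hcl2'
      linarith
  have hlr1 := hlr T1 hrb1 hT1.1 hcr1.1.2 hcr1.2.2
  have hlr2 := hlr T2 hrb2 (by linarith [hT2.1]) hcr2.1.2 hcr2.2.2
  have hlr3 := hlr T3 hrb3 (by linarith [hT3.1]) hcr3.1.2 hcr3.2.2
  -- the r's are pairwise adjacent
  have hr12 : 1 ≤ |F (z + T2) - F (z + T1)| := by
    refine (Hadj (z + T1) (z + T2) hrb1 hrb2 ?_ ?_).1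
    · rw [eTT]; linarith [hT1.2, hT2.1]
    · rw [eTT]; linarith [hT1.1, hT2.2]
  have hr13 : 1 ≤ |F (z + T3) - F (z + T1)| := by
    refine (Hadj (z + T1) (z + T3) hrb1 hrb3 ?_ ?_).1
    · rw [eTT]; linarith [hT1.2, hT3.1]
    · rw [eTT]; linarith [hT1.1, hT3.2]
  have hr23 : 1 ≤ |F (z + T3) - F (z + T2)| := by
    refine (Hadj (z + T2) (z + T3) hrb2 hrb3 ?_ ?_).1
    · rw [eTT]; linarith [hT2.2, hT3.1]
    · rw [eTT]; linarith [hT2.1, hT3.2]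
  exact three_sep hlr1 hlr2 hlr3
    (by rwa [abs_sub_comm] at hr12) (by rwa [abs_sub_comm] at hr13)
    (by rwa [abs_sub_comm] at hr23)

/-- The fine-pair gadget: close lattice points in the central region have
close images. -/
private lemma gadget (hx : 30 ≤ x) (hy : 30 ≤ y) (hε : 0 < ε) (hε1 : ε ≤ 1/100)
    (Hadj : HAdj x y ε F) (Hnon : HNon x y ε F) (z w : ℤ)
    (hzb : |ε*(z:ℝ)| ≤ x/2 + 2) (hwb : |ε*(w:ℝ)| ≤ x/2 + 2)
    (hlt : 0 < ε*(w:ℝ) - ε*(z:ℝ)) (hd : ε*(w:ℝ) - ε*(z:ℝ) < 1) :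
    |F w - F z| < 1 := by
  have habs : ∀ t : ℤ, |ε*((-t : ℤ):ℝ)| = |ε*(t:ℝ)| := by
    intro t; push_cast; rw [mul_neg, abs_neg]
  rcases le_or_gt (-1 : ℝ) (ε*(z:ℝ)) with hc | hc
  · exact gadgetA hx hy hε hε1 Hadj Hnon z w hzb hwb hlt hd hc
  · -- mirror: apply gadgetA to `fun t => F (-t)`
    have Hadj' : HAdj x y ε (fun t => F (-t)) := by
      intro a b ha hb h1 h2
      have h1' : 1 ≤ ε*((-a : ℤ):ℝ) - ε*((-b : ℤ):ℝ) := by push_cast; push_cast at h1; linarith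
      have h2' : ε*((-a : ℤ):ℝ) - ε*((-b : ℤ):ℝ) ≤ x := by push_cast; push_cast at h2; linarith
      have := Hadj (-b) (-a) (by rw [habs]; exact hb) (by rw [habs]; exact ha) h1' h2'
      show 1 ≤ |F (-b) - F (-a)| ∧ |F (-b) - F (-a)| ≤ y
      rwa [abs_sub_comm]
    have Hnon' : HNon x y ε (fun t => F (-t)) := by
      intro a b ha hb h1 h2
      have h1' : 0 < ε*((-a : ℤ):ℝ) - ε*((-b : ℤ):ℝ) := by push_cast; push_cast at h1; linarith
      have h2' : ε*((-a : ℤ):ℝ) - ε*((-b : ℤ):ℝ) < 1 ∨ x < ε*((-a : ℤ):ℝ) - ε*((-b : ℤ):ℝ) := by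
        push_cast; push_cast at h2
        rcases h2 with h | h
        · left; linarith
        · right; linarith
      have := Hnon (-b) (-a) (by rw [habs]; exact hb) (by rw [habs]; exact ha) h1' h2'
      show |F (-b) - F (-a)| < 1 ∨ y < |F (-b) - F (-a)|
      rwa [abs_sub_comm]
    have h1' : 0 < ε*((-z : ℤ):ℝ) - ε*((-w : ℤ):ℝ) := by push_cast; linarith
    have h2' : ε*((-z : ℤ):ℝ) - ε*((-w : ℤ):ℝ) < 1 := by push_cast; linarith
    have h3' : (-1 : ℝ) ≤ ε*((-w : ℤ):ℝ) := by
      push_cast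
      have : ε*(w:ℝ) ≤ ε*(z:ℝ) + 1 := by linarith
      linarith
    have := gadgetA (F := fun t => F (-t)) hx hy hε hε1 Hadj' Hnon' (-w) (-z)
      (by rw [habs]; exact hwb) (by rw [habs]; exact hzb) h1' h2' h3'
    have h4 : |F z - F w| < 1 := by
      have hh : (fun t => F (-t)) (-z) = F z := by simp
      have hh2 : (fun t => F (-t)) (-w) = F w := by simp
      rwa [neg_neg, neg_neg] at this
    rwa [abs_sub_comm]

set_option maxHeartbeats 1600000 in
/-- Core with anchored sign: no consistent `F` exists. -/
private lemma coreAux (hx : 30 ≤ x) (hy : 30 ≤ y) (hε : 0 < ε) (hε1 : ε ≤ 1/100)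
    (hεs : ε * (x + y + 2) ≤ |x - y| / 2) (hxy : x ≠ y)
    (Hadj : HAdj x y ε F) (Hnon : HNon x y ε F)
    (A C : ℕ) (zB : ℤ)
    (hA1 : ε*(A:ℝ) ≤ x) (hA2 : x < ε*(A:ℝ) + ε)
    (hC1 : 1 ≤ ε*(C:ℝ)) (hC2 : ε*(C:ℝ) < 1 + ε)
    (hwin : ∀ k : ℕ, k ≤ A + C + 1 → |ε*((zB + (k:ℤ) : ℤ):ℝ)| ≤ x/2 + 2)
    (hanc : 1 ≤ F (zB + (C:ℤ)) - F zB) : False := by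
  set P : ℕ → ℝ := fun k => F (zB + (k:ℤ)) with hPdef
  have hC0 : 2 ≤ C := by
    by_contra h
    push_neg at h
    have h1 : (C:ℝ) ≤ 1 := by
      have : C ≤ 1 := by omega
      exact_mod_cast this
    nlinarith
  have hCpos : 0 < C := by omega
  have hA3C : 3*C < A := by
    have h1 : ε*((3*C : ℕ):ℝ) < ε*(A:ℝ) := by
      push_cast
      nlinarith
    have := (mul_lt_mul_iff_right₀ hε).mp h1
    exact_mod_cast this
  have hwx : ∀ k : ℕ, k ≤ A + C + 1 → |ε*((zB + (k:ℤ) : ℤ):ℝ)| ≤ x := by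
    intro k hk
    have h := hwin k hk
    rw [abs_le] at h ⊢
    exact ⟨by linarith [h.1], by linarith [h.2]⟩
  -- difference identity
  have ediff : ∀ k d : ℕ,
      ε*((zB + ((k+d : ℕ):ℤ) : ℤ):ℝ) - ε*((zB + (k:ℤ) : ℤ):ℝ) = ε*(d:ℝ) := by
    intro k d; push_cast; ring
  -- fine pairs
  have fine : ∀ k d : ℕ, 0 < d → k + d ≤ A + C + 1 → ε*(d:ℝ) < 1 →
      |P (k+d) - P k| < 1 := by
    intro k d hd0 hkd hd1
    apply gadget hx hy hε hε1 Hadj Hnon (zB + (k:ℤ)) (zB + ((k+d : ℕ):ℤ))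
      (hwin k (by omega)) (hwin (k+d) hkd)
    · rw [ediff]
      have : (0:ℝ) < (d:ℝ) := by exact_mod_cast hd0
      positivity
    · rw [ediff]; exact hd1
  -- adjacent pairs
  have adjP : ∀ k d : ℕ, k + d ≤ A + C + 1 → 1 ≤ ε*(d:ℝ) → ε*(d:ℝ) ≤ x →
      1 ≤ |P (k+d) - P k| ∧ |P (k+d) - P k| ≤ y := by
    intro k d hkd h1 h2
    apply Hadj (zB + (k:ℤ)) (zB + ((k+d : ℕ):ℤ)) (hwx k (by omega)) (hwx (k+d) hkd)
    · rw [ediff]; exact h1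
    · rw [ediff]; exact h2
  -- from positivity and abs bound to signed bound
  have sgn : ∀ u : ℝ, 0 < u → 1 ≤ |u| → 1 ≤ u := by
    intro u h1 h2
    rcases le_abs.mp h2 with h | h
    · exact h
    · linarith
  -- coherence of unit steps
  have coh : ∀ k : ℕ, k ≤ A + 1 → 1 ≤ P (k + C) - P k := by
    intro k
    induction k with
    | zero =>
      intro _
      have h0 : (0:ℕ) + C = C := by omega
      rw [h0]
      have hP0 : P 0 = F zB := by
        show F (zB + ((0:ℕ):ℤ)) = F zB
        norm_num
      have hPC : P C = F (zB + (C:ℤ)) := rfl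
      rw [hP0, hPC]
      exact hanc
    | succ k ih =>
      intro hk1
      have g := ih (by omega)
      have e1 : |P (k + C + 1) - P (k + C)| < 1 := by
        have := fine (k + C) 1 (by omega) (by omega) (by push_cast; linarith)
        have hidx : (k + C) + 1 = k + C + 1 := by omega
        rwa [hidx] at this
      have habs1 : 1 ≤ |P (k + C + 1) - P k| := by
        have hidx : k + (C + 1) = k + C + 1 := by omega
        have h := (adjP k (C+1) (by omega) (by push_cast; linarith)
          (by push_cast; linarith)).1
        rwa [hidx] at h
      have h : 1 ≤ P (k + C + 1) - P k := by
        apply sgn _ _ habs1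
        have := abs_lt.mp e1
        linarith [this.1]
      have e2 : |P (k + 1) - P k| < 1 :=
        fine k 1 (by omega) (by omega) (by push_cast; linarith)
      have habs2 : 1 ≤ |P (k + 1 + C) - P (k + 1)| := by
        have hidx : (k + 1) + C = k + 1 + C := by omega
        have h := (adjP (k+1) C (by omega) hC1 (by linarith)).1
        rwa [hidx] at h
      apply sgn _ _ habs2
      have hidx : k + 1 + C = k + C + 1 := by omega
      rw [hidx]
      have := abs_lt.mp e2
      linarith [this.1]
  -- multi-step lower bound
  have mstep : ∀ m k : ℕ, k + m*C ≤ A + C + 1 → (m:ℝ) ≤ P (k + m*C) - P k := by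
    intro m
    induction m with
    | zero => intro k _; simp
    | succ m ih =>
      intro k hk
      have hsm : (m+1)*C = m*C + C := by ring
      rw [hsm] at hk ⊢
      obtain ⟨t, ht⟩ : ∃ t, m*C = t := ⟨_, rfl⟩
      rw [ht] at hk ⊢
      have h1 := ih k (by rw [ht]; omega)
      rw [ht] at h1
      have h2 := coh (k + t) (by omega)
      have hidx : k + (t + C) = (k + t) + C := by omega
      rw [hidx]
      push_cast
      linarith
  -- far pairs: image gap exceeds y
  have far : ∀ k : ℕ, k + (A+1) ≤ A + C + 1 → y < P (k + (A+1)) - P k := by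
    intro k hk
    set q : ℕ := (A+1)/C with hq
    set r : ℕ := (A+1) % C with hr
    have hqr : C*q + r = A + 1 := Nat.div_add_mod (A+1) C
    have hq3 : 3 ≤ q := by
      rw [hq, Nat.le_div_iff_mul_le hCpos]
      omega
    have hrC : r < C := Nat.mod_lt _ hCpos
    obtain ⟨t, ht⟩ : ∃ t, q*C = t := ⟨_, rfl⟩
    have htr : C*q = t := by rw [← ht]; ring
    rw [htr] at hqr
    have hm := mstep q k (by rw [ht]; omega)
    rw [ht] at hm
    have hq3r : (3:ℝ) ≤ (q:ℝ) := by exact_mod_cast hq3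
    have hgap : 1 < P (k + (A+1)) - P k := by
      rcases Nat.eq_zero_or_pos r with h0 | hpos
      · have hidx : k + (A+1) = k + t := by omega
        rw [hidx]
        linarith
      · have ht2 : |P ((k + t) + r) - P (k + t)| < 1 := by
          apply fine (k + t) r hpos (by omega)
          have hrc : (r:ℝ) ≤ (C:ℝ) - 1 := by
            have : (r:ℕ) + 1 ≤ C := hrC
            have h := (Nat.cast_le (α := ℝ)).mpr this
            push_cast at h
            linarith
          nlinarith
        have hidx : (k + t) + r = k + (A+1) := by omega
        rw [hidx] at ht2
        have := abs_lt.mp ht2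
        linarith [this.1]
    have hnon := Hnon (zB + (k:ℤ)) (zB + ((k + (A+1) : ℕ):ℤ)) (hwx k (by omega))
      (hwx (k + (A+1)) hk) (by rw [ediff]; push_cast; nlinarith)
      (by rw [ediff]; right; push_cast; linarith)
    have habs : |P (k + (A+1)) - P k| = P (k + (A+1)) - P k :=
      abs_of_pos (by linarith)
    rcases hnon with h | h
    · exfalso
      have h2 : |P (k + (A+1)) - P k| < 1 := h
      rw [habs] at h2
      linarith
    · have h2 : y < |P (k + (A+1)) - P k| := h
      rwa [habs] at h2
  -- final double counting
  rcases lt_or_gt_of_ne hxy with hxlty | hyltx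
  · -- x < y : use fine pairs of length C-1 and far pairs of length A+1
    have habs : |x - y| = y - x := by
      rw [abs_sub_comm]; exact abs_of_pos (by linarith)
    rw [habs] at hεs
    set C' : ℕ := C - 1 with hC'
    have hC'1 : 1 ≤ C' := by omega
    have hCC : C = C' + 1 := by omega
    have hΔ := rearrange P (A+1) C'
    have hupper : ∑ k ∈ Finset.range (A+1), (P (C' + k) - P k) < ((A+1 : ℕ):ℝ) := by
      have hcard : ((A+1 : ℕ):ℝ) = ∑ _k ∈ Finset.range (A+1), (1:ℝ) := by
        rw [Finset.sum_const, Finset.card_range]; simp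
      rw [hcard]
      apply Finset.sum_lt_sum_of_nonempty
      · exact Finset.nonempty_range_iff.mpr (by omega)
      · intro k hk
        rw [Finset.mem_range] at hk
        have hidx : k + C' = C' + k := by omega
        have hfine := fine k C' (by omega) (by omega)
          (by
            have hcc : (C':ℝ) ≤ (C:ℝ) - 1 := by
              have : (C':ℕ) + 1 ≤ C := by omega
              have h := (Nat.cast_le (α := ℝ)).mpr this
              push_cast at h
              linarith
            nlinarith)
        rw [hidx] at hfine
        calc P (C' + k) - P k ≤ |P (C' + k) - P k| := le_abs_self _
        _ < 1 := hfine
    have hlower : ((C' : ℕ):ℝ) * y < ∑ k ∈ Finset.range C', (P ((A+1) + k) - P k) := by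
      have hcard : ((C' : ℕ):ℝ) * y = ∑ _k ∈ Finset.range C', y := by
        rw [Finset.sum_const, Finset.card_range]; rw [nsmul_eq_mul]
      rw [hcard]
      apply Finset.sum_lt_sum_of_nonempty
      · exact Finset.nonempty_range_iff.mpr (by omega)
      · intro k hk
        rw [Finset.mem_range] at hk
        have hidx : k + (A+1) = (A+1) + k := by omega
        have hf := far k (by omega)
        rwa [hidx] at hf
    rw [hΔ] at hlower
    have hfin : ((C' : ℕ):ℝ) * y < ((A+1 : ℕ):ℝ) := by linarith
    have h1 : ε * (((C' : ℕ):ℝ) * y) < ε * ((A+1 : ℕ):ℝ) :=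
      (mul_lt_mul_iff_right₀ hε).mpr hfin
    have h2 : ε * ((C':ℝ)) = ε*(C:ℝ) - ε := by
      rw [hCC]; push_cast; ring
    have h3 : ε * (((C' : ℕ):ℝ) * y) = (ε*(C':ℝ)) * y := by ring
    have h4 : ε * ((A+1 : ℕ):ℝ) = ε*(A:ℝ) + ε := by push_cast; ring
    rw [h3, h2, h4] at h1
    nlinarith
  · -- y < x : use unit steps of length C and adjacent pairs of length A
    have habs : |x - y| = x - y := abs_of_pos (by linarith)
    rw [habs] at hεs
    have hΔ := rearrange P A C
    have hupper : ∑ k ∈ Finset.range C, (P (A + k) - P k) ≤ (C:ℝ) * y := by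
      have hcard : (C:ℝ) * y = ∑ _k ∈ Finset.range C, y := by
        rw [Finset.sum_const, Finset.card_range]; rw [nsmul_eq_mul]
      rw [hcard]
      apply Finset.sum_le_sum
      intro k hk
      rw [Finset.mem_range] at hk
      have hidx : k + A = A + k := by omega
      have ha := (adjP k A (by omega) (by nlinarith) hA1).2
      rw [hidx] at ha
      calc P (A + k) - P k ≤ |P (A + k) - P k| := le_abs_self _
      _ ≤ y := ha
    have hlower : (A:ℝ) ≤ ∑ k ∈ Finset.range A, (P (C + k) - P k) := by
      have hcard : (A:ℝ) = ∑ _k ∈ Finset.range A, (1:ℝ) := by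
        rw [Finset.sum_const, Finset.card_range]; simp
      rw [hcard]
      apply Finset.sum_le_sum
      intro k hk
      rw [Finset.mem_range] at hk
      have hidx : k + C = C + k := by omega
      have hc := coh k (by omega)
      rwa [hidx] at hc
    rw [← hΔ] at hlower
    have hfin : (A:ℝ) ≤ (C:ℝ) * y := by linarith
    have h1 : ε * (A:ℝ) ≤ ε * ((C:ℝ) * y) :=
      mul_le_mul_of_nonneg_left hfin hε.le
    have h3 : ε * ((C:ℝ) * y) = (ε*(C:ℝ)) * y := by ring
    rw [h3] at h1
    nlinarith

set_option maxHeartbeats 1600000 in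
/-- Core: no consistent `F` exists at all. -/
private lemma core (hx : 30 ≤ x) (hy : 30 ≤ y) (hε : 0 < ε) (hε1 : ε ≤ 1/100)
    (hεs : ε * (x + y + 2) ≤ |x - y| / 2) (hxy : x ≠ y)
    (Hadj : HAdj x y ε F) (Hnon : HNon x y ε F) : False := by
  set A : ℕ := (⌊x/ε⌋).toNat with hA
  set C : ℕ := (⌈1/ε⌉).toNat with hC
  have hAz : ((A:ℕ):ℝ) = ((⌊x/ε⌋ : ℤ):ℝ) := by
    rw [hA]
    have h0 : (0:ℤ) ≤ ⌊x/ε⌋ := Int.floor_nonneg.mpr (by positivity)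
    rw [show (((⌊x/ε⌋.toNat : ℕ)):ℝ) = ((⌊x/ε⌋.toNat : ℤ):ℝ) by push_cast; ring,
      Int.toNat_of_nonneg h0]
  have hCz : ((C:ℕ):ℝ) = ((⌈1/ε⌉ : ℤ):ℝ) := by
    rw [hC]
    have h0 : (0:ℤ) ≤ ⌈1/ε⌉ := Int.ceil_nonneg (by positivity)
    rw [show (((⌈1/ε⌉.toNat : ℕ)):ℝ) = ((⌈1/ε⌉.toNat : ℤ):ℝ) by push_cast; ring,
      Int.toNat_of_nonneg h0]
  have hA1 : ε*(A:ℝ) ≤ x := by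
    have h := Int.floor_le (x/ε)
    have h2 : (A:ℝ) ≤ x/ε := by rw [hAz]; exact h
    calc ε*(A:ℝ) ≤ ε*(x/ε) := by nlinarith
    _ = x := by field_simp
  have hA2 : x < ε*(A:ℝ) + ε := by
    have h := Int.lt_floor_add_one (x/ε)
    have h2 : x/ε < (A:ℝ) + 1 := by rw [hAz]; exact h
    have h3 := (div_lt_iff₀ hε).mp h2
    linarith [h3]
  have hC1 : 1 ≤ ε*(C:ℝ) := by
    have h := Int.le_ceil (1/ε)
    have h2 : 1/ε ≤ (C:ℝ) := by rw [hCz]; exact h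
    calc (1:ℝ) = ε*(1/ε) := by field_simp
    _ ≤ ε*(C:ℝ) := by nlinarith
  have hC2 : ε*(C:ℝ) < 1 + ε := by
    have h := Int.ceil_lt_add_one (1/ε)
    have h2 : (C:ℝ) < 1/ε + 1 := by rw [hCz]; exact h
    have h3 : ε*(C:ℝ) < ε*(1/ε + 1) := by nlinarith
    calc ε*(C:ℝ) < ε*(1/ε + 1) := h3
    _ = 1 + ε := by field_simp
  set M : ℤ := ((A:ℤ) + (C:ℤ))/2 with hM
  set zB : ℤ := -M with hzB
  have hMb : 2*M ≤ (A:ℤ) + (C:ℤ) ∧ (A:ℤ) + (C:ℤ) ≤ 2*M + 1 := by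
    constructor <;> omega
  have hMr : (0:ℝ) ≤ (M:ℝ) := by
    have h : (0:ℤ) ≤ M := by omega
    exact_mod_cast h
  have hMru : ε*(M:ℝ) ≤ x/2 + 1 := by
    have h2 : (2:ℝ)*(M:ℝ) ≤ (A:ℝ) + (C:ℝ) := by exact_mod_cast hMb.1
    nlinarith
  have hwin : ∀ k : ℕ, k ≤ A + C + 1 → |ε*((zB + (k:ℤ) : ℤ):ℝ)| ≤ x/2 + 2 := by
    intro k hk
    have hkr : (k:ℝ) ≤ (A:ℝ) + (C:ℝ) + 1 := by exact_mod_cast hk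
    have hgeo : ε*((zB + (k:ℤ) : ℤ):ℝ) = ε*(k:ℝ) - ε*(M:ℝ) := by
      rw [hzB]; push_cast; ring
    rw [hgeo, abs_le]
    constructor
    · have h0 : 0 ≤ ε*(k:ℝ) := by positivity
      linarith
    · have h2 : (A:ℝ) + (C:ℝ) ≤ 2*(M:ℝ) + 1 := by exact_mod_cast hMb.2
      nlinarith
  have hzBwin : |ε*((zB:ℤ):ℝ)| ≤ x := by
    have h := hwin 0 (by omega)
    have h0 : zB + ((0:ℕ):ℤ) = zB := by norm_num
    rw [h0] at h
    rw [abs_le] at h ⊢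
    exact ⟨by linarith [h.1], by linarith [h.2]⟩
  have hzCwin : |ε*((zB + (C:ℤ) : ℤ):ℝ)| ≤ x := by
    have h := hwin C (by omega)
    rw [abs_le] at h ⊢
    exact ⟨by linarith [h.1], by linarith [h.2]⟩
  have hdiffC : ε*((zB + (C:ℤ) : ℤ):ℝ) - ε*((zB:ℤ):ℝ) = ε*(C:ℝ) := by
    push_cast; ring
  have hanch := Hadj zB (zB + (C:ℤ)) hzBwin hzCwin
    (by rw [hdiffC]; exact hC1) (by rw [hdiffC]; linarith)
  rcases le_abs.mp hanch.1 with hpos | hneg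
  · exact coreAux hx hy hε hε1 hεs hxy Hadj Hnon A C zB hA1 hA2 hC1 hC2 hwin hpos
  · -- flip the embedding
    have Hadj' : HAdj x y ε (fun t => -F t) := by
      intro a b ha hb h1 h2
      have h := Hadj a b ha hb h1 h2
      have he : |(fun t => -F t) b - (fun t => -F t) a| = |F b - F a| := by
        show |(-F b) - (-F a)| = _
        rw [show (-F b) - (-F a) = -(F b - F a) by ring, abs_neg]
      rw [he]
      exact h
    have Hnon' : HNon x y ε (fun t => -F t) := by
      intro a b ha hb h1 h2
      have h := Hnon a b ha hb h1 h2
      have he : |(fun t => -F t) b - (fun t => -F t) a| = |F b - F a| := by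
        show |(-F b) - (-F a)| = _
        rw [show (-F b) - (-F a) = -(F b - F a) by ring, abs_neg]
      rw [he]
      exact h
    refine coreAux hx hy hε hε1 hεs hxy Hadj' Hnon' A C zB hA1 hA2 hC1 hC2 hwin ?_
    show 1 ≤ -F (zB + (C:ℤ)) - (-F zB)
    linarith

end Core

/-- Dimension-one analogue of Lemma 2.1: there is `C₀ > 0` such that for all
distinct `x, y ≥ C₀`, all integers `n ≥ x` and all sufficiently small `ε > 0`,
vertices of `G_{n,1}(x,ε)` at distance at most `1` in the natural embedding,
both of norm at most `n - x`, are at distance at most `1` in every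
`(1,y)`-annulus embedding into `ℝ`. -/
theorem close_pairs_stay_close_dim_one :
    ∃ C₀ : ℝ, 0 < C₀ ∧ ∀ x y : ℝ, C₀ ≤ x → C₀ ≤ y → x ≠ y →
      ∀ n : ℕ, x ≤ (n : ℝ) →
        ∃ ε₀ : ℝ, 0 < ε₀ ∧ ∀ ε : ℝ, 0 < ε → ε < ε₀ →
          ∀ v₁ v₂ : GndVert 1 n ε,
            dist v₁.1 v₂.1 ≤ 1 → ‖v₁.1‖ ≤ (n : ℝ) - x → ‖v₂.1‖ ≤ (n : ℝ) - x →
            ∀ f : GndVert 1 n ε → EuclideanSpace ℝ (Fin 1),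
              IsAnnulusEmbedding (Gnd 1 n x ε) 1 y f →
              dist (f v₁) (f v₂) ≤ 1 := by
  refine ⟨30, by norm_num, ?_⟩
  intro x y hx hy hxy n hn
  have habs0 : 0 < |x - y| := abs_pos.mpr (sub_ne_zero.mpr hxy)
  have hden : 0 < x + y + 2 := by linarith
  refine ⟨min (|x - y| / (2*(x+y+2))) (1/100), lt_min (by positivity) (by norm_num), ?_⟩
  intro ε hε hεlt v₁ v₂ _ _ _ f hemb
  exfalso
  have hε1 : ε ≤ 1/100 := le_of_lt (lt_of_lt_of_le hεlt (min_le_right _ _))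
  have hεs : ε * (x + y + 2) ≤ |x - y| / 2 := by
    have h1 : ε < |x - y| / (2*(x+y+2)) := lt_of_lt_of_le hεlt (min_le_left _ _)
    have h2 : ε * (2*(x+y+2)) < |x - y| := (lt_div_iff₀ (by positivity)).mp h1
    linarith
  -- translate the embedding into an integer-indexed function
  set F : ℤ → ℝ := fun z =>
    if h : |ε*(z:ℝ)| ≤ (n:ℝ) then
      f ⟨(WithLp.toLp 2 (fun _ => ε*(z:ℝ)) : EuclideanSpace ℝ (Fin 1)),
        ⟨fun _ => ⟨z, rfl⟩, by rw [norm1]; exact h⟩⟩ 0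
    else 0 with hF
  have key : ∀ z w : ℤ, ∀ (hzx : |ε*(z:ℝ)| ≤ x) (hwx : |ε*(w:ℝ)| ≤ x),
      0 < ε*(w:ℝ) - ε*(z:ℝ) →
      ((Gnd 1 n x ε).Adj
        ⟨(WithLp.toLp 2 (fun _ => ε*(z:ℝ)) : EuclideanSpace ℝ (Fin 1)),
          ⟨fun _ => ⟨z, rfl⟩, by rw [norm1]; exact le_trans hzx hn⟩⟩
        ⟨(WithLp.toLp 2 (fun _ => ε*(w:ℝ)) : EuclideanSpace ℝ (Fin 1)),
          ⟨fun _ => ⟨w, rfl⟩, by rw [norm1]; exact le_trans hwx hn⟩⟩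
        ↔ (1 ≤ ε*(w:ℝ) - ε*(z:ℝ) ∧ ε*(w:ℝ) - ε*(z:ℝ) ≤ x)) := by
    intro z w hzx hwx hpos
    constructor
    · rintro ⟨-, hmem⟩
      rw [Set.mem_Icc, dist1] at hmem
      have hmem' : 1 ≤ |ε*(z:ℝ) - ε*(w:ℝ)| ∧ |ε*(z:ℝ) - ε*(w:ℝ)| ≤ x := hmem
      rw [abs_sub_comm, abs_of_pos hpos] at hmem'
      exact hmem'
    · rintro ⟨h1, h2⟩
      have hne : ((⟨(WithLp.toLp 2 (fun _ => ε*(z:ℝ)) : EuclideanSpace ℝ (Fin 1)),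
          ⟨fun _ => ⟨z, rfl⟩, by rw [norm1]; exact le_trans hzx hn⟩⟩ : GndVert 1 n ε)) ≠
          (⟨(WithLp.toLp 2 (fun _ => ε*(w:ℝ)) : EuclideanSpace ℝ (Fin 1)),
          ⟨fun _ => ⟨w, rfl⟩, by rw [norm1]; exact le_trans hwx hn⟩⟩ : GndVert 1 n ε) := by
        intro hc
        have h3 := congrArg (fun t : GndVert 1 n ε => t.1 0) hc
        simp only at h3
        linarith
      refine ⟨hne, ?_⟩
      rw [Set.mem_Icc, dist1]
      show 1 ≤ |ε*(z:ℝ) - ε*(w:ℝ)| ∧ |ε*(z:ℝ) - ε*(w:ℝ)| ≤ x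
      rw [abs_sub_comm, abs_of_pos hpos]
      exact ⟨h1, h2⟩
  have hFval : ∀ z : ℤ, (hzn : |ε*(z:ℝ)| ≤ (n:ℝ)) →
      F z = f ⟨(WithLp.toLp 2 (fun _ => ε*(z:ℝ)) : EuclideanSpace ℝ (Fin 1)),
        ⟨fun _ => ⟨z, rfl⟩, by rw [norm1]; exact hzn⟩⟩ 0 := by
    intro z hzn
    rw [hF]
    exact dif_pos hzn
  have hne' : ∀ z w : ℤ, 0 < ε*(w:ℝ) - ε*(z:ℝ) →
      ∀ (hz : |ε*(z:ℝ)| ≤ (n:ℝ)) (hw : |ε*(w:ℝ)| ≤ (n:ℝ)),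
      ((⟨(WithLp.toLp 2 (fun _ => ε*(z:ℝ)) : EuclideanSpace ℝ (Fin 1)),
          ⟨fun _ => ⟨z, rfl⟩, by rw [norm1]; exact hz⟩⟩ : GndVert 1 n ε)) ≠
      (⟨(WithLp.toLp 2 (fun _ => ε*(w:ℝ)) : EuclideanSpace ℝ (Fin 1)),
          ⟨fun _ => ⟨w, rfl⟩, by rw [norm1]; exact hw⟩⟩ : GndVert 1 n ε) := by
    intro z w hpos hz hw hc
    have h3 := congrArg (fun t : GndVert 1 n ε => t.1 0) hc
    simp only at h3
    linarith
  have Hadj : HAdj x y ε F := by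
    intro z w hzx hwx h1 h2
    have hzn : |ε*(z:ℝ)| ≤ (n:ℝ) := le_trans hzx hn
    have hwn : |ε*(w:ℝ)| ≤ (n:ℝ) := le_trans hwx hn
    have hpos : 0 < ε*(w:ℝ) - ε*(z:ℝ) := by linarith
    have hne := hne' z w hpos hzn hwn
    have hiff := hemb.2 _ _ hne
    have hadj := (key z w hzx hwx hpos).mpr ⟨h1, h2⟩
    have hmem := hiff.mp hadj
    rw [Set.mem_Icc, dist1] at hmem
    rw [hFval z hzn, hFval w hwn]
    rw [abs_sub_comm] at hmem
    exact hmem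
  have Hnon : HNon x y ε F := by
    intro z w hzx hwx hpos hout
    have hzn : |ε*(z:ℝ)| ≤ (n:ℝ) := le_trans hzx hn
    have hwn : |ε*(w:ℝ)| ≤ (n:ℝ) := le_trans hwx hn
    have hne := hne' z w hpos hzn hwn
    have hiff := hemb.2 _ _ hne
    have hnadj : ¬ (Gnd 1 n x ε).Adj
        ⟨(WithLp.toLp 2 (fun _ => ε*(z:ℝ)) : EuclideanSpace ℝ (Fin 1)),
          ⟨fun _ => ⟨z, rfl⟩, by rw [norm1]; exact hzn⟩⟩
        ⟨(WithLp.toLp 2 (fun _ => ε*(w:ℝ)) : EuclideanSpace ℝ (Fin 1)),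
          ⟨fun _ => ⟨w, rfl⟩, by rw [norm1]; exact hwn⟩⟩ := by
      intro hadj
      have h2 := (key z w hzx hwx hpos).mp hadj
      rcases hout with h | h
      · linarith [h2.1]
      · linarith [h2.2]
    have hnmem := (fun hm => hnadj (hiff.mpr hm))
    rw [Set.mem_Icc, dist1] at hnmem
    have hnmem2 : ¬(1 ≤ |F z - F w| ∧ |F z - F w| ≤ y) := by
      rw [hFval z hzn, hFval w hwn]
      exact hnmem
    rcases lt_or_ge (|F w - F z|) 1 with h | h
    · exact Or.inl h
    · right
      by_contra hcon
      push_neg at hcon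
      exact hnmem2 ⟨by rwa [abs_sub_comm], by rwa [abs_sub_comm]⟩
  exact core (le_trans (by norm_num) hx) (le_trans (by norm_num) hy) hε hε1 hεs hxy Hadj Hnon
end
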